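/- arXiv:0712.0815 — 11 statements merged into one kernel-verified Lean document; each statement's English description precedes it below -/
import Mathlib

section
/- The free associative algebra k⟨x, y⟩ on two generators over a field k is left primitive: the vector space M with basis {e₀, e₁, e₂, …} on which x acts by x·eᵢ = e_{i−1} (with e_{−1} = 0) and y acts by y·eᵢ = e_{i²+1} is a faithful simple left k⟨x,y⟩-module. -/
/-!
A word `w` in `x, y` of length at most `B` sends `eₙ` to the basis vector `e_{w(n)}`, where `w(n)`
is obtained from `n` by the maps `i ↦ i - 1` and `i ↦ i² + 1`, as long as `n ≥ B`. For `n ≥ 2B + 2`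
all intermediate indices are at least `B`, and the numbers `i² + 1` with `i ≥ B` are more than `B`
apart, so `w(n)` determines the last `y` of `w` together with the run of `x`'s following it;
peeling these off shows that distinct words give distinct `w(n)`. Hence the coefficients of
`p ∈ k⟨x, y⟩` can be read off from `p • eₙ`, and the module is faithful. It is simple because
`x ^ (deg v)` sends any `v ≠ 0` to a nonzero multiple of `e₀`, and `e_{j+1} = x ^ (j² - j) y eⱼ`.
-/

namespace FreeAlgebra

lemma basisFreeMonoid_apply (R : Type*) [CommSemiring R] {X : Type*} (w : FreeMonoid X) :
    basisFreeMonoid R X w = FreeMonoid.lift (ι R) w := by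
  simp [basisFreeMonoid, equivMonoidAlgebraFreeMonoid]

end FreeAlgebra

namespace FreeAlgebraTwoPrimitive

def letterIndex : Fin 2 → ℕ → ℕ := ![fun i => i - 1, fun i => i ^ 2 + 1]

def wordIndex (n : ℕ) (w : List (Fin 2)) : ℕ := w.foldr letterIndex n

@[simp] lemma wordIndex_nil (n : ℕ) : wordIndex n [] = n := rfl

@[simp] lemma wordIndex_cons (n : ℕ) (s : Fin 2) (w : List (Fin 2)) :
    wordIndex n (s :: w) = letterIndex s (wordIndex n w) := rfl

@[simp] lemma letterIndex_zero (i : ℕ) : letterIndex 0 i = i - 1 := rfl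

@[simp] lemma letterIndex_one (i : ℕ) : letterIndex 1 i = i ^ 2 + 1 := rfl

lemma sub_length_le_wordIndex (n : ℕ) (w : List (Fin 2)) : n - w.length ≤ wordIndex n w := by
  induction w with
  | nil => simp
  | cons s w ih =>
    fin_cases s
    · simp only [Fin.zero_eta, wordIndex_cons, letterIndex_zero, List.length_cons]; omega
    · simp only [Fin.mk_one, wordIndex_cons, letterIndex_one, List.length_cons]
      have := Nat.le_self_pow two_ne_zero (wordIndex n w)
      omega

lemma sq_add_one_sub_lt {t t' a a' B : ℕ} (ha' : a' ≤ B) (ht : B ≤ t) (htt' : t < t') :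
    t ^ 2 + 1 - a < t' ^ 2 + 1 - a' := by
  have : (t + 1) ^ 2 ≤ t' ^ 2 := Nat.pow_le_pow_left htt' 2
  rw [add_sq] at this
  omega

lemma sq_add_one_sub_inj {t t' a a' B : ℕ} (ha : a ≤ B) (ha' : a' ≤ B) (ht : B ≤ t) (ht' : B ≤ t')
    (h : t ^ 2 + 1 - a = t' ^ 2 + 1 - a') : t = t' ∧ a = a' := by
  rcases lt_trichotomy t t' with htt' | rfl | htt'
  · exact absurd h (sq_add_one_sub_lt ha' ht htt').ne
  · have := Nat.le_self_pow two_ne_zero t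
    omega
  · exact absurd h (sq_add_one_sub_lt ha ht' htt').ne'

lemma lt_sq_add_one_sub {n t a B : ℕ} (ha : a ≤ B) (hn : 2 * B + 2 ≤ n) (ht : n - B ≤ t) :
    n < t ^ 2 + 1 - a := by
  have hsq : (n - B) * (B + 2) ≤ t ^ 2 := by rw [sq]; exact Nat.mul_le_mul ht (by omega)
  have hB : B ≤ (n - B) * B := Nat.le_mul_of_pos_left B (by omega)
  rw [mul_add] at hsq
  omega

-- `replicate a 0 ++ u` is the word `x ^ a * u`: carrying the run of `x`'s peeled off so far is what
-- lets the induction remove one letter at a time.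
lemma replicate_append_eq_of_wordIndex_sub_eq {B n : ℕ} (hn : 2 * B + 2 ≤ n) :
    ∀ (u v : List (Fin 2)) (a b : ℕ), a + u.length ≤ B → b + v.length ≤ B →
      wordIndex n u - a = wordIndex n v - b → .replicate a 0 ++ u = .replicate b 0 ++ v
  | ⟨_ + 2, h⟩ :: _, _, _, _, _, _, _ => absurd h (by omega)
  | _, ⟨_ + 2, h⟩ :: _, _, _, _, _, _ => absurd h (by omega)
  | ⟨0, _⟩ :: u, v, a, b, hu, hv, h => by
    have := replicate_append_eq_of_wordIndex_sub_eq hn u v (a + 1) b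
      (by simp only [List.length_cons] at hu; omega) hv (by simpa [Nat.sub_sub, add_comm] using h)
    simpa [List.replicate_succ'] using this
  | u, ⟨0, _⟩ :: v, a, b, hu, hv, h => by
    have := replicate_append_eq_of_wordIndex_sub_eq hn u v a (b + 1)
      hu (by simp only [List.length_cons] at hv; omega) (by simpa [Nat.sub_sub, add_comm] using h)
    simpa [List.replicate_succ'] using this
  | ⟨1, _⟩ :: u, ⟨1, _⟩ :: v, a, b, hu, hv, h => by
    simp only [Fin.mk_one, List.length_cons, wordIndex_cons, letterIndex_one] at hu hv h
    obtain ⟨huv, rfl⟩ := sq_add_one_sub_inj (B := B) (by omega) (by omega)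
      (by have := sub_length_le_wordIndex n u; omega)
      (by have := sub_length_le_wordIndex n v; omega) h
    obtain rfl : u = v := by
      simpa using replicate_append_eq_of_wordIndex_sub_eq hn u v 0 0 (by omega) (by omega)
        (by simpa)
    rfl
  | ⟨1, _⟩ :: u, [], a, b, hu, _, h => by
    simp only [Fin.mk_one, List.length_cons, wordIndex_cons, letterIndex_one, wordIndex_nil] at hu h
    have := lt_sq_add_one_sub (t := wordIndex n u) (a := a) (by omega) hn
      (by have := sub_length_le_wordIndex n u; omega)
    omega
  | [], ⟨1, _⟩ :: v, a, b, _, hv, h => by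
    simp only [Fin.mk_one, List.length_cons, wordIndex_cons, letterIndex_one, wordIndex_nil] at hv h
    have := lt_sq_add_one_sub (t := wordIndex n v) (a := b) (by omega) hn
      (by have := sub_length_le_wordIndex n v; omega)
    omega
  | [], [], a, b, hu, _, h => by
    obtain rfl : a = b := by simp only [wordIndex_nil] at h; simp only [List.length_nil] at hu; omega
    rfl
termination_by u v => u.length + v.length

lemma eq_of_wordIndex_eq {B n : ℕ} (hn : 2 * B + 2 ≤ n) {u v : List (Fin 2)} (hu : u.length ≤ B)
    (hv : v.length ≤ B) (h : wordIndex n u = wordIndex n v) : u = v := by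
  simpa using replicate_append_eq_of_wordIndex_sub_eq hn u v 0 0 (by simpa) (by simpa) (by simpa)

open Finsupp

variable (R : Type*) [CommSemiring R]

noncomputable def lowerOp : (ℕ →₀ R) →ₗ[R] (ℕ →₀ R) :=
  Finsupp.lsum R fun i => if i = 0 then 0 else Finsupp.lsingle (i - 1)

noncomputable def squareOp : (ℕ →₀ R) →ₗ[R] (ℕ →₀ R) :=
  Finsupp.lsum R fun i => Finsupp.lsingle (i ^ 2 + 1)

noncomputable def rep : FreeAlgebra R (Fin 2) →ₐ[R] Module.End R (ℕ →₀ R) :=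
  FreeAlgebra.lift R ![lowerOp R, squareOp R]

variable {R}

lemma lowerOp_apply (v : ℕ →₀ R) (j : ℕ) : lowerOp R v j = v (j + 1) := by
  induction v using Finsupp.induction_linear with
  | zero => simp
  | add v w hv hw => simp [hv, hw]
  | single i c =>
    rcases i with _ | i
    · simp [lowerOp]
    · simp [lowerOp, single_apply]

lemma lowerOp_pow_apply (a : ℕ) (v : ℕ →₀ R) (j : ℕ) : (lowerOp R ^ a) v j = v (j + a) := by
  induction a generalizing j with
  | zero => rfl
  | succ a ih => rw [pow_succ', Module.End.mul_apply, lowerOp_apply, ih, add_right_comm]; rfl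

lemma lowerOp_pow_single {a i : ℕ} (h : a ≤ i) (c : R) :
    (lowerOp R ^ a) (single i c) = single (i - a) c := by
  ext j
  rw [lowerOp_pow_apply, single_apply, single_apply]
  exact if_congr (by omega) rfl rfl

lemma squareOp_single (i : ℕ) (c : R) : squareOp R (single i c) = single (i ^ 2 + 1) c := by
  simp [squareOp]

@[simp] lemma rep_ι_zero : rep R (FreeAlgebra.ι R 0) = lowerOp R := by
  simp [rep]

@[simp] lemma rep_ι_one : rep R (FreeAlgebra.ι R 1) = squareOp R := by
  simp [rep]

lemma rep_ι_single (s : Fin 2) {m : ℕ} (hm : m ≠ 0) (c : R) :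
    rep R (FreeAlgebra.ι R s) (single m c) = single (letterIndex s m) c := by
  fin_cases s
  · simpa using lowerOp_pow_single (a := 1) (Nat.one_le_iff_ne_zero.mpr hm) c
  · simpa using squareOp_single m c

lemma rep_lift_ofList_single {l : List (Fin 2)} {n : ℕ} (hn : l.length ≤ n) (c : R) :
    rep R (FreeMonoid.lift (FreeAlgebra.ι R) (FreeMonoid.ofList l)) (single n c) =
      single (wordIndex n l) c := by
  induction l with
  | nil => simp
  | cons s l ih =>
    have hl : l.length < n := by simpa using hn
    have hpos : wordIndex n l ≠ 0 := by have := sub_length_le_wordIndex n l; omega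
    rw [FreeMonoid.ofList_cons, map_mul, FreeMonoid.lift_eval_of, map_mul, Module.End.mul_apply,
      ih hl.le, rep_ι_single s hpos]
    rfl

lemma rep_basisFreeMonoid_single {w : FreeMonoid (Fin 2)} {n : ℕ} (hw : w.length ≤ n) (c : R) :
    rep R (FreeAlgebra.basisFreeMonoid R (Fin 2) w) (single n c) =
      single (wordIndex n w.toList) c := by
  rw [FreeAlgebra.basisFreeMonoid_apply, ← FreeMonoid.ofList_toList w]
  exact rep_lift_ofList_single hw c

lemma basisFreeMonoid_repr_eq_rep_apply {p : FreeAlgebra R (Fin 2)} {B n : ℕ}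
    (hn : 2 * B + 2 ≤ n)
    (hp : ∀ u ∈ ((FreeAlgebra.basisFreeMonoid R (Fin 2)).repr p).support, u.length ≤ B)
    {w : FreeMonoid (Fin 2)} (hw : w.length ≤ B) :
    (FreeAlgebra.basisFreeMonoid R (Fin 2)).repr p w =
      rep R p (single n 1) (wordIndex n w.toList) := by
  set b := FreeAlgebra.basisFreeMonoid R (Fin 2)
  have hsum : rep R p (single n 1) =
      ∑ u ∈ (b.repr p).support, single (wordIndex n u.toList) (b.repr p u) := by
    conv_lhs => rw [← b.linearCombination_repr p, Finsupp.linearCombination_apply, Finsupp.sum]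
    rw [map_sum, LinearMap.sum_apply]
    refine Finset.sum_congr rfl fun u hu => ?_
    rw [map_smul, LinearMap.smul_apply, ← map_smul, smul_single_one,
      rep_basisFreeMonoid_single (by have := hp u hu; omega)]
  rw [hsum, Finsupp.finsetSum_apply, Finset.sum_eq_single w]
  · exact single_eq_same.symm
  · intro u hu huw
    refine single_eq_of_ne fun h => huw (FreeMonoid.toList.injective ?_)
    exact eq_of_wordIndex_eq hn (hp u hu) hw h.symm
  · intro hw'
    rw [Finsupp.notMem_support_iff.mp hw', single_zero, Finsupp.zero_apply]

lemma rep_injective : Function.Injective (rep R) := by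
  intro p q hpq
  set b := FreeAlgebra.basisFreeMonoid R (Fin 2)
  refine b.repr.injective (Finsupp.ext fun w => ?_)
  set B := max ((b.repr p).support.sup FreeMonoid.length)
    (max ((b.repr q).support.sup FreeMonoid.length) w.length)
  rw [basisFreeMonoid_repr_eq_rep_apply (le_refl (2 * B + 2)) (fun u hu => ?_) (by omega),
    basisFreeMonoid_repr_eq_rep_apply (le_refl (2 * B + 2)) (fun u hu => ?_) (by omega), hpq]
  · exact le_max_of_le_right (le_max_of_le_left (Finset.le_sup hu))
  · exact le_max_of_le_left (Finset.le_sup hu)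

lemma exists_rep_apply_single_zero_eq (z : ℕ →₀ R) : ∃ a, rep R a (single 0 1) = z := by
  have hsingle (j : ℕ) : ∃ a, rep R a (single 0 1) = single j 1 := by
    induction j with
    | zero => exact ⟨1, by simp⟩
    | succ j ih =>
      obtain ⟨a, ha⟩ := ih
      refine ⟨FreeAlgebra.ι R 0 ^ (j ^ 2 - j) * FreeAlgebra.ι R 1 * a, ?_⟩
      have hj : j ≤ j ^ 2 := Nat.le_self_pow two_ne_zero j
      rw [map_mul, map_mul, Module.End.mul_apply, Module.End.mul_apply, ha, rep_ι_one,
        squareOp_single, map_pow, rep_ι_zero, lowerOp_pow_single (by omega)]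
      congr 1
      omega
  induction z using Finsupp.induction_linear with
  | zero => exact ⟨0, by simp⟩
  | add z₁ z₂ h₁ h₂ =>
    obtain ⟨a₁, rfl⟩ := h₁
    obtain ⟨a₂, rfl⟩ := h₂
    exact ⟨a₁ + a₂, by simp⟩
  | single j c =>
    obtain ⟨a, ha⟩ := hsingle j
    exact ⟨c • a, by rw [map_smul, LinearMap.smul_apply, ha, smul_single_one]⟩

lemma lowerOp_pow_max'_support {v : ℕ →₀ R} (hv : v.support.Nonempty) :
    (lowerOp R ^ v.support.max' hv) v = single 0 (v (v.support.max' hv)) := by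
  ext j
  rw [lowerOp_pow_apply]
  rcases j with _ | j
  · simp
  · rw [single_eq_of_ne (by omega), ← Finsupp.notMem_support_iff]
    exact fun h => by have := v.support.le_max' _ h; omega

variable {k : Type*} [Field k]

lemma exists_rep_apply_eq_single_zero {v : ℕ →₀ k} (hv : v ≠ 0) :
    ∃ a, rep k a v = single 0 1 := by
  have hsupp := support_nonempty_iff.mpr hv
  set n := v.support.max' hsupp
  have hvn : v n ≠ 0 := mem_support_iff.mp (v.support.max'_mem hsupp)
  refine ⟨(v n)⁻¹ • FreeAlgebra.ι k 0 ^ n, ?_⟩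
  rw [map_smul, map_pow, rep_ι_zero, LinearMap.smul_apply, lowerOp_pow_max'_support, smul_single,
    smul_eq_mul, inv_mul_cancel₀ hvn]

lemma exists_rep_apply_eq {v : ℕ →₀ k} (hv : v ≠ 0) (z : ℕ →₀ k) : ∃ a, rep k a v = z := by
  obtain ⟨a, ha⟩ := exists_rep_apply_eq_single_zero hv
  obtain ⟨b, hb⟩ := exists_rep_apply_single_zero_eq z
  exact ⟨b * a, by rw [map_mul, Module.End.mul_apply, ha, hb]⟩

end FreeAlgebraTwoPrimitive

/-- The free algebra k⟨x,y⟩ is left primitive: the vector space with basis e₀, e₁, …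
on which x acts by x·eᵢ = e_{i-1} (e_{-1} = 0) and y acts by y·eᵢ = e_{i²+1} is a
faithful simple left k⟨x,y⟩-module. -/
theorem freeAlgebra_two_gens_left_primitive (k : Type) [Field k] :
    let X : (ℕ →₀ k) →ₗ[k] (ℕ →₀ k) :=
      Finsupp.lsum k fun i => if i = 0 then 0 else Finsupp.lsingle (i - 1)
    let Y : (ℕ →₀ k) →ₗ[k] (ℕ →₀ k) :=
      Finsupp.lsum k fun i => Finsupp.lsingle (i ^ 2 + 1)
    let φ : FreeAlgebra k (Fin 2) →ₐ[k] Module.End k (ℕ →₀ k) :=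
      FreeAlgebra.lift k ![X, Y]
    letI : Module (FreeAlgebra k (Fin 2)) (ℕ →₀ k) := Module.compHom _ φ.toRingHom
    FaithfulSMul (FreeAlgebra k (Fin 2)) (ℕ →₀ k) ∧
      IsSimpleModule (FreeAlgebra k (Fin 2)) (ℕ →₀ k) := by
  intro X Y φ
  let _ : Module (FreeAlgebra k (Fin 2)) (ℕ →₀ k) := Module.compHom _ φ.toRingHom
  exact ⟨⟨fun h => FreeAlgebraTwoPrimitive.rep_injective (LinearMap.ext h)⟩,
    isSimpleModule_iff_toSpanSingleton_surjective.mpr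
      ⟨inferInstance, fun _ hv => FreeAlgebraTwoPrimitive.exists_rep_apply_eq hv⟩⟩
end

section
/- Let A = k⟨x, y⟩ be the free algebra on two generators over a field k. The subalgebra k + Ay is a free algebra on the countably infinite set of generators {y, xy, x²y, x³y, …}. -/
/-!
The words in `x, y` form a basis of `k⟨x,y⟩`, and a word that is empty or ends in `y` factors
uniquely into blocks `xⁿy`: the block lengths can be read off letter by letter. Hence `ψ` is
induced by an injective map of free monoids, so it is injective. For the range, `k + Ay` is a
subalgebra containing every `xⁿy`; conversely the `a` with `a xⁿy ∈ range ψ` for all `n`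
form a subspace containing `1` and stable under right multiplication by `x` (shift `n`) and by `y`
(multiply by `y = x⁰y`), hence all of `k⟨x,y⟩`.
-/

open Function

namespace FreeAlgebra

variable {R X Y : Type*} [CommSemiring R]

theorem lift_freeMonoidLift_injective {w : X → FreeMonoid Y}
    (hw : Injective (FreeMonoid.lift w)) :
    Injective (lift R fun a => FreeMonoid.lift (ι R) (w a)) := by
  have h_eq : lift R (fun a => FreeMonoid.lift (ι R) (w a)) =
      (equivMonoidAlgebraFreeMonoid (R := R) (X := Y)).symm.toAlgHom.comp
        ((MonoidAlgebra.mapDomainAlgHom R R (FreeMonoid.lift w)).comp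
          (equivMonoidAlgebraFreeMonoid (R := R) (X := X)).toAlgHom) := by
    ext a
    simp [equivMonoidAlgebraFreeMonoid]
  rw [h_eq]
  exact equivMonoidAlgebraFreeMonoid.symm.injective.comp
    ((MonoidAlgebra.mapDomain_injective hw).comp equivMonoidAlgebraFreeMonoid.injective)

theorem induction_mul_ι {motive : FreeAlgebra R X → Prop} (one : motive 1)
    (add : ∀ a b, motive a → motive b → motive (a + b))
    (smul : ∀ (r : R) a, motive a → motive (r • a))
    (mul_ι : ∀ a x, motive a → motive (a * ι R x)) (a : FreeAlgebra R X) : motive a := by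
  suffices h : ∀ b a, motive a → motive (a * b) from one_mul a ▸ h a 1 one
  intro b
  induction b with
  | grade0 r => intro a ha; rw [← Algebra.commutes, ← Algebra.smul_def]; exact smul r a ha
  | grade1 x => exact fun a => mul_ι a x
  | mul b c hb hc => intro a ha; rw [← mul_assoc]; exact hc _ (hb a ha)
  | add b c hb hc => intro a ha; rw [mul_add]; exact add _ _ (hb a ha) (hc a ha)

theorem mul_ι_one_mem_range_lift_pow_mul (a : FreeAlgebra R (Fin 2)) :
    a * ι R 1 ∈ (lift R fun n : ℕ => ι R 0 ^ n * ι R 1).range := by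
  set x : FreeAlgebra R (Fin 2) := ι R 0
  set y : FreeAlgebra R (Fin 2) := ι R 1
  set S := (lift R fun n : ℕ => x ^ n * y).range
  have gen_mem (n : ℕ) : x ^ n * y ∈ S := ⟨ι R n, lift_ι_apply _ n⟩
  suffices h : ∀ n : ℕ, a * (x ^ n * y) ∈ S by simpa only [pow_zero, one_mul] using h 0
  induction a using induction_mul_ι with
  | one => simpa only [one_mul] using gen_mem
  | add a b ha hb => exact fun n => (add_mul a b _).symm ▸ add_mem (ha n) (hb n)
  | smul r a ha => exact fun n => (smul_mul_assoc r a _).symm ▸ S.smul_mem (ha n) r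
  | mul_ι a i ha =>
    intro n
    match i with
    | 0 =>
      show a * x * (x ^ n * y) ∈ S
      rw [mul_assoc, ← mul_assoc x, ← pow_succ']
      exact ha (n + 1)
    | 1 =>
      show a * y * (x ^ n * y) ∈ S
      exact S.mul_mem (by simpa only [pow_zero, one_mul] using ha 0) (gen_mem n)

end FreeAlgebra

namespace List

variable {α : Type*} [DecidableEq α]

/-- The exponents of the blocks `xⁿy` of a word, every letter other than `y` counting as `x`;
an unfinished trailing block `xᵐ` is dropped. -/
def blockLengths (y : α) : List α → List ℕ
  | [] => []
  | b :: t => if b = y then 0 :: blockLengths y t else (blockLengths y t).modifyHead (· + 1)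

theorem blockLengths_replicate_append {x y : α} (hxy : x ≠ y) (n : ℕ) (t : List α) :
    blockLengths y (replicate n x ++ y :: t) = n :: blockLengths y t := by
  induction n with
  | zero => simp [blockLengths]
  | succ n ih => simp [replicate_succ, blockLengths, hxy, ih]

theorem blockLengths_flatMap {x y : α} (hxy : x ≠ y) (l : List ℕ) :
    blockLengths y (l.flatMap fun n => replicate n x ++ [y]) = l := by
  induction l with
  | nil => rfl
  | cons n l ih => simp [blockLengths_replicate_append hxy, ih]

end List

namespace FreeMonoid

variable {α : Type*}

theorem toList_of_pow (x : α) (n : ℕ) : toList (of x ^ n) = List.replicate n x := by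
  induction n with
  | zero => rfl
  | succ n ih => rw [pow_succ, toList_mul, ih, toList_of, List.replicate_succ']

theorem lift_of_pow_mul_of_injective {x y : α} (hxy : x ≠ y) :
    Injective (lift fun n : ℕ => of x ^ n * of y) := by
  classical
  refine LeftInverse.injective (g := fun w => ofList (List.blockLengths y w.toList)) fun m => ?_
  simp only [lift_apply, toList_prod, List.map_map, Function.comp_def, toList_mul, toList_of_pow,
    toList_of, ← List.flatMap_def, List.blockLengths_flatMap hxy, ofList_toList]

end FreeMonoid

variable {R A : Type*} [CommSemiring R] [Semiring A] [Algebra R A] in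
def Subalgebra.algebraMapAddMul (y : A) : Subalgebra R A where
  carrier := {z | ∃ (c : R) (a : A), z = algebraMap R A c + a * y}
  mul_mem' := by
    rintro _ _ ⟨c, a, rfl⟩ ⟨d, b, rfl⟩
    refine ⟨c * d, algebraMap R A c * b + a * algebraMap R A d + a * y * b, ?_⟩
    simp only [map_mul, add_mul, mul_add, mul_assoc, Algebra.commutes d y]
    abel
  add_mem' := by
    rintro _ _ ⟨c, a, rfl⟩ ⟨d, b, rfl⟩
    exact ⟨c + d, a + b, by rw [map_add, add_mul]; abel⟩
  algebraMap_mem' c := ⟨c, 0, by simp⟩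

/-- In A = k⟨x,y⟩, the subalgebra k + Ay is free on the countably infinite
set of generators {y, xy, x²y, …}: the algebra map from the free algebra on ℕ
sending n to xⁿy is injective, and its range is exactly k + Ay. -/
theorem k_plus_Ay_is_free
    (k : Type) [Field k] :
    let A := FreeAlgebra k (Fin 2)
    let x : A := FreeAlgebra.ι k 0
    let y : A := FreeAlgebra.ι k 1
    let ψ : FreeAlgebra k ℕ →ₐ[k] A := FreeAlgebra.lift k fun n => x ^ n * y
    Function.Injective ψ ∧
      (ψ.range : Set A) = {z : A | ∃ (c : k) (a : A), z = algebraMap k A c + a * y} := by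
  intro A x y ψ
  have hψ : ψ = FreeAlgebra.lift k fun n =>
      FreeMonoid.lift (FreeAlgebra.ι k) (.of 0 ^ n * .of 1) := by
    simp [ψ, x, y]
  refine ⟨hψ ▸ FreeAlgebra.lift_freeMonoidLift_injective
    (FreeMonoid.lift_of_pow_mul_of_injective (by decide)), ?_⟩
  change (ψ.range : Set A) = Subalgebra.algebraMapAddMul y
  refine congrArg _ (le_antisymm ?_ ?_)
  · rw [← Algebra.adjoin_range_eq_range_freeAlgebra_lift, Algebra.adjoin_le_iff]
    rintro _ ⟨n, rfl⟩
    exact ⟨0, x ^ n, by simp⟩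
  · rintro _ ⟨c, a, rfl⟩
    exact add_mem (ψ.range.algebraMap_mem c) (FreeAlgebra.mul_ι_one_mem_range_lift_pow_mul a)
end

section
/- A free associative algebra over a field on a countably infinite set of generators is left primitive. -/
/-- A ring is left primitive if it admits a faithful simple left module. -/
def IsLeftPrimitiveRing.{u} (R : Type u) [Ring R] : Prop :=
  ∃ (M : Type u) (_ : AddCommGroup M) (_ : Module R M),
    IsSimpleModule R M ∧ FaithfulSMul R M

/-!
A proper left ideal `I` such that `1 ∈ I + R c R` for every `c ≠ 0` makes `R` left primitive:
for a maximal left ideal `m ⊇ I`, the annihilator of the simple module `R ⧸ m` is a two-sided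
ideal contained in `m`, hence zero.

For `R = k[FreeMonoid ℕ]`, take `I` the annihilator of the basis vector `ξ = e_[]` of
`k[List ℕ]`, on which a letter `a` sends `e_t` to `e_(a :: t)`, except when `a :: t` is a word
`w ++ 1 :: 0ⁿ` with `n` encoding a word `v`: then `e_t` goes to `ξ` if `v = w`, and to `0` if
`w` is not a suffix of `v`. Given `c ≠ 0` with `w₁` in its support and a letter `P` occurring
in no word of the support, `P · c · (1 :: 0ⁿ)` with `n` encoding `P :: w₁` sends `ξ` to
`c(w₁) • ξ`: the monomial `w₁` is matched, while every other `P :: w` is incomparable with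
`P :: w₁` in the suffix order, so no suffix read along the way matches and the whole word is a
mismatch.
-/

universe u

theorem IsLeftPrimitiveRing.of_forall_exists_mul_mul_sub_one_mem {R : Type u} [Ring R]
    (I : Ideal R) (hI : I ≠ ⊤) (h : ∀ c : R, c ≠ 0 → ∃ u v, u * c * v - 1 ∈ I) :
    IsLeftPrimitiveRing R := by
  obtain ⟨m, hm, hIm⟩ := I.exists_le_maximal hI
  refine ⟨R ⧸ m, inferInstance, inferInstance, isSimpleModule_iff_isCoatom.mpr hm.out, ⟨?_⟩⟩
  intro a b hab
  by_contra hne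
  have hmul : ∀ v, (a - b) * v ∈ m := fun v => by
    rw [← Submodule.Quotient.mk_eq_zero, sub_mul, ← smul_eq_mul, ← smul_eq_mul,
      Submodule.Quotient.mk_sub, Submodule.Quotient.mk_smul, Submodule.Quotient.mk_smul,
      hab, sub_self]
  obtain ⟨u, v, huv⟩ := h (a - b) (sub_ne_zero.mpr hne)
  have hucv : u * (a - b) * v ∈ m := by rw [mul_assoc]; exact m.mul_mem_left u (hmul v)
  exact hm.ne_top (m.eq_top_iff_one.mpr (by simpa using m.sub_mem hucv (hIm huv)))

theorem IsLeftPrimitiveRing.of_ringEquiv {R S : Type u} [Ring R] [Ring S]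
    (h : IsLeftPrimitiveRing S) (e : R ≃+* S) : IsLeftPrimitiveRing R := by
  obtain ⟨M, _, _, hM, hfaith⟩ := h
  let _ : Module R M := Module.compHom M (e : R →+* S)
  have : RingHomSurjective (e : R →+* S) := ⟨e.surjective⟩
  let idₛₗ : M →ₛₗ[(e : R →+* S)] M := { AddMonoidHom.id M with map_smul' := fun _ _ => rfl }
  exact ⟨M, inferInstance, inferInstance,
    (LinearMap.isSimpleModule_iff_of_bijective idₛₗ Function.bijective_id).mpr hM,
    ⟨fun h => e.injective (hfaith.eq_of_smul_eq_smul h)⟩⟩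

namespace MarkedWord

open List

/-- Both `w` and `v` can be read off `mark w v`: the last `1` separates them, since `v` is
written in unary with the letter `0`. -/
def mark (w v : List ℕ) : List ℕ := w ++ 1 :: replicate (Encodable.encode v) 0

theorem mark_ne_nil (w v : List ℕ) : mark w v ≠ [] := by simp [mark]

theorem mark_inj {w₁ v₁ w₂ v₂ : List ℕ} (h : mark w₁ v₁ = mark w₂ v₂) :
    w₁ = w₂ ∧ v₁ = v₂ := by
  have tail_inj : ∀ {v₁ v₂ : List ℕ} (a : List ℕ),
      1 :: replicate (Encodable.encode v₁) 0 = a ++ 1 :: replicate (Encodable.encode v₂) 0 →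
        a = [] ∧ v₁ = v₂ := by
    intro v₁ v₂ a h
    cases a with
    | nil => simpa [replicate_inj] using h
    | cons x a =>
      have : 1 ∈ replicate (Encodable.encode v₁) 0 := by simp at h; simp [h.2]
      simp at this
  rcases append_eq_append_iff.mp h with ⟨a, rfl, ha⟩ | ⟨a, rfl, ha⟩
  · obtain ⟨rfl, rfl⟩ := tail_inj a ha; simp
  · obtain ⟨rfl, rfl⟩ := tail_inj a ha; simp

theorem suffix_and_eq_of_mark_suffix_mark {w v w' v' : List ℕ}
    (h : mark w' v' <:+ mark w v) : w' <:+ w ∧ v' = v := by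
  obtain ⟨s, hs⟩ := h
  obtain ⟨hw, rfl⟩ := mark_inj (w₁ := s ++ w') (by simpa [mark] using hs)
  exact ⟨⟨s, hw⟩, rfl⟩

theorem cons_suffix_cons_iff_of_notMem {a : ℕ} {w w' : List ℕ} (ha : a ∉ w) :
    a :: w' <:+ a :: w ↔ w' = w := by
  refine ⟨fun h => ?_, fun h => h ▸ suffix_rfl⟩
  rcases suffix_cons_iff.mp h with h | h
  · exact (cons_inj_right a).mp h
  · exact absurd (h.subset mem_cons_self) ha

def IsMatch (z : List ℕ) : Prop := ∃ w, z = mark w w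

def IsMismatch (z : List ℕ) : Prop := ∃ w v, z = mark w v ∧ ¬ w <:+ v

theorem not_isMatch_and_not_isMismatch_of_suffix_mark_self {w t : List ℕ}
    (ht : t <:+ mark w w) (hne : t ≠ mark w w) : ¬ IsMatch t ∧ ¬ IsMismatch t := by
  constructor
  · rintro ⟨w', rfl⟩
    obtain ⟨-, rfl⟩ := suffix_and_eq_of_mark_suffix_mark ht
    exact hne rfl
  · rintro ⟨w', v', rfl, hw'⟩
    obtain ⟨hsuf, rfl⟩ := suffix_and_eq_of_mark_suffix_mark ht
    exact hw' hsuf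

theorem not_isMatch_of_suffix_mark {u v t : List ℕ} (hvu : ¬ v <:+ u) (ht : t <:+ mark u v) :
    ¬ IsMatch t := by
  rintro ⟨w, rfl⟩
  obtain ⟨hsuf, rfl⟩ := suffix_and_eq_of_mark_suffix_mark ht
  exact hvu hsuf

section Representation

variable (k : Type*) [Field k]

open Finsupp

open Classical in
noncomputable def step (z : List ℕ) : List ℕ →₀ k :=
  if IsMatch z then single [] 1 else if IsMismatch z then 0 else single z 1

noncomputable def letterEnd (a : ℕ) : Module.End k (List ℕ →₀ k) :=
  linearCombination k fun t => step k (a :: t)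

noncomputable def rep : MonoidAlgebra k (FreeMonoid ℕ) →ₐ[k] Module.End k (List ℕ →₀ k) :=
  MonoidAlgebra.lift k _ _ (FreeMonoid.lift (letterEnd k))

noncomputable def run (l : List ℕ) : List ℕ →₀ k :=
  FreeMonoid.lift (letterEnd k) (FreeMonoid.ofList l) (single [] 1)

variable {k}

theorem letterEnd_single (a : ℕ) (t : List ℕ) :
    letterEnd k a (single t 1) = step k (a :: t) := by
  rw [letterEnd, linearCombination_single, one_smul]

theorem run_nil : run k [] = single [] 1 := rfl

theorem run_cons (a : ℕ) (l : List ℕ) : run k (a :: l) = letterEnd k a (run k l) := by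
  simp [run, FreeMonoid.ofList_cons]

theorem rep_single_apply (l : List ℕ) (r : k) :
    rep k (MonoidAlgebra.single (FreeMonoid.ofList l) r) (single [] 1) = r • run k l := by
  simp [rep, MonoidAlgebra.lift_single, run]

theorem run_eq_single (l : List ℕ) (h : ∀ t, t <:+ l → ¬ IsMatch t ∧ ¬ IsMismatch t) :
    run k l = single l 1 := by
  induction l with
  | nil => exact run_nil
  | cons a l ih =>
    obtain ⟨hmatch, hmismatch⟩ := h _ suffix_rfl
    rw [run_cons, ih fun t ht => h t (ht.trans (suffix_cons a l)), letterEnd_single, step,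
      if_neg hmatch, if_neg hmismatch]

theorem run_eq_zero (l : List ℕ) (hmatch : ∀ t, t <:+ l → ¬ IsMatch t)
    (hmismatch : ∃ t, t <:+ l ∧ IsMismatch t) : run k l = 0 := by
  induction l with
  | nil =>
    obtain ⟨t, ht, ⟨w, v, rfl, -⟩⟩ := hmismatch
    exact absurd (suffix_nil.mp ht) (mark_ne_nil w v)
  | cons a l ih =>
    have hmatch' : ∀ t, t <:+ l → ¬ IsMatch t := fun t ht =>
      hmatch t (ht.trans (suffix_cons a l))
    by_cases hl : ∃ t, t <:+ l ∧ IsMismatch t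
    · rw [run_cons, ih hmatch' hl, map_zero]
    · have hself : IsMismatch (a :: l) := by
        obtain ⟨t, ht, htmis⟩ := hmismatch
        rcases suffix_cons_iff.mp ht with rfl | ht
        · exact htmis
        · exact absurd ⟨t, ht, htmis⟩ hl
      rw [run_cons, run_eq_single l fun t ht => ⟨hmatch' t ht, fun hm => hl ⟨t, ht, hm⟩⟩,
        letterEnd_single, step, if_neg (hmatch _ suffix_rfl), if_pos hself]

theorem run_eq_single_nil_of_isMatch {z : List ℕ} (hz : IsMatch z)
    (h : ∀ t, t <:+ z → t ≠ z → ¬ IsMatch t ∧ ¬ IsMismatch t) : run k z = single [] 1 := by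
  cases z with
  | nil => obtain ⟨w, hw⟩ := hz; exact absurd hw.symm (mark_ne_nil w w)
  | cons a l =>
    have hl : ∀ t, t <:+ l → ¬ IsMatch t ∧ ¬ IsMismatch t := fun t ht =>
      h t (ht.trans (suffix_cons a l)) fun he => by simpa [he] using ht.length_le
    rw [run_cons, run_eq_single l hl, letterEnd_single, step, if_pos hz]

theorem run_mark_self (w : List ℕ) : run k (mark w w) = single [] 1 :=
  run_eq_single_nil_of_isMatch ⟨w, rfl⟩ fun _ ht hne =>
    not_isMatch_and_not_isMismatch_of_suffix_mark_self ht hne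

theorem run_mark_of_not_suffix {u v : List ℕ} (hvu : ¬ v <:+ u) (huv : ¬ u <:+ v) :
    run k (mark u v) = 0 :=
  run_eq_zero _ (fun _ ht => not_isMatch_of_suffix_mark hvu ht) ⟨_, suffix_rfl, u, v, rfl, huv⟩

theorem single_mul_single_mul_single_mark (P : ℕ) (w : FreeMonoid ℕ) (v : List ℕ) (r s : k) :
    MonoidAlgebra.single (FreeMonoid.ofList [P]) r * MonoidAlgebra.single w s *
        MonoidAlgebra.single (FreeMonoid.ofList (mark [] v)) 1 =
      MonoidAlgebra.single (FreeMonoid.ofList (mark (P :: w.toList) v)) (r * s) := by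
  rw [MonoidAlgebra.single_mul_single, MonoidAlgebra.single_mul_single, mul_one]
  rfl

theorem exists_rep_mul_mul_apply_eq (c : MonoidAlgebra k (FreeMonoid ℕ)) (hc : c ≠ 0) :
    ∃ u v, rep k (u * c * v) (single [] 1) = single [] 1 := by
  obtain ⟨w₁, hw₁⟩ : c.coeff.support.Nonempty := by simpa using hc
  obtain ⟨P, hP⟩ :=
    Infinite.exists_notMem_finset (c.coeff.support.biUnion fun w => w.toList.toFinset)
  have hPw : ∀ w ∈ c.coeff.support, P ∉ w.toList := fun w hw hPw =>
    hP (Finset.mem_biUnion.mpr ⟨w, hw, mem_toFinset.mpr hPw⟩)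
  have hsum : ∀ u v, rep k (u * c * v) (single [] 1) =
      ∑ w ∈ c.coeff.support, rep k (u * MonoidAlgebra.single w (c.coeff w) * v) (single [] 1) := by
    intro u v
    conv_lhs => rw [← c.sum_coeff_single]
    rw [Finsupp.sum, Finset.mul_sum, Finset.sum_mul, map_sum, LinearMap.sum_apply]
  refine ⟨MonoidAlgebra.single (FreeMonoid.ofList [P]) (c.coeff w₁)⁻¹,
    MonoidAlgebra.single (FreeMonoid.ofList (mark [] (P :: w₁.toList))) 1, ?_⟩
  rw [hsum, Finset.sum_eq_single_of_mem w₁ hw₁]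
  · rw [single_mul_single_mul_single_mark, rep_single_apply, run_mark_self,
      inv_mul_cancel₀ (by simpa using hw₁), one_smul]
  · intro w hw hne
    have hne : w.toList ≠ w₁.toList := fun h => hne (by simpa using h)
    rw [single_mul_single_mul_single_mark, rep_single_apply, run_mark_of_not_suffix, smul_zero]
    · exact (cons_suffix_cons_iff_of_notMem (hPw w hw)).not.mpr hne.symm
    · exact (cons_suffix_cons_iff_of_notMem (hPw w₁ hw₁)).not.mpr hne

end Representation

end MarkedWord

open MarkedWord Finsupp in
theorem isLeftPrimitiveRing_monoidAlgebra_freeMonoid (k : Type u) [Field k] :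
    IsLeftPrimitiveRing (MonoidAlgebra k (FreeMonoid ℕ)) := by
  let ξ : List ℕ →₀ k := single [] 1
  let I : Ideal (MonoidAlgebra k (FreeMonoid ℕ)) :=
    Ideal.comap (rep k) (LinearMap.ker (LinearMap.toSpanSingleton _ _ ξ))
  have mem_I : ∀ a, a ∈ I ↔ rep k a ξ = 0 := fun a => by simp [I]
  refine .of_forall_exists_mul_mul_sub_one_mem I (fun h => ?_) fun c hc => ?_
  · simpa [ξ] using (mem_I 1).mp (h ▸ Submodule.mem_top)
  · obtain ⟨u, v, h⟩ := exists_rep_mul_mul_apply_eq c hc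
    refine ⟨u, v, (mem_I _).mpr ?_⟩
    rw [map_sub, map_one, LinearMap.sub_apply, h, Module.End.one_apply, sub_self]

/-- The free associative algebra over a field on countably infinitely many
generators is left primitive. -/
theorem freeAlgebra_countable_gens_left_primitive (k : Type) [Field k] :
    IsLeftPrimitiveRing (FreeAlgebra k ℕ) :=
  (isLeftPrimitiveRing_monoidAlgebra_freeMonoid k).of_ringEquiv
    FreeAlgebra.equivMonoidAlgebraFreeMonoid.toRingEquiv
end

section
/- For every natural number d ≥ 2, the free associative algebra k⟨x₁, …, x_d⟩ over a field k is left primitive. -/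
/-!
Let `FreeAlgebra k X` act on `ℕ →₀ k`, with basis `e m`, through a code `e : X → ℕ`: a letter of
code `0` acts as the shift `e (m + 1) ↦ e m`, `e 0 ↦ 0`, and a letter of code `j ≠ 0` as
`e m ↦ e ((2j + 1) 2 ^ m)`.

The module is simple: a power of the shift sends a nonzero vector to a nonzero multiple of `e 0`
(its top coordinate lands on `0`, all others are killed), from `e 0` a letter of nonzero code
climbs arbitrarily high, and the shift then comes down to every `e m`.

It is faithful when the code is injective: for large `n` a word `w` sends `e n` to a single basis
vector `e (evalWord w n)`, and distinct words eventually give distinct values, since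
`(2j + 1) 2 ^ m` determines `j` and `m`, and the huge values produced by letters of nonzero code
are never matched by a few shifts. Evaluating at such an `e n`, the images of the monomials in the
support of an element are linearly independent.
-/

open Filter

theorem IsLeftPrimitiveRing.of_injective_of_cyclic.{u} {S : Type*} {R V : Type u} [Semiring S] [Ring R]
    [AddCommGroup V] [Module S V] [Nontrivial V] (ρ : R →+* Module.End S V)
    (hρ : Function.Injective ρ) (hcyclic : ∀ v : V, v ≠ 0 → ∀ w, ∃ r, ρ r v = w) :
    IsLeftPrimitiveRing R := by
  let _ : Module R V := Module.compHom V ρ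
  exact ⟨V, inferInstance, inferInstance,
    isSimpleModule_iff_toSpanSingleton_surjective.2 ⟨inferInstance, hcyclic⟩,
    ⟨fun h => hρ (LinearMap.ext h)⟩⟩

theorem LinearMap.injective_of_forall_exists_linearIndepOn {R ι A V W : Type*} [CommSemiring R]
    [AddCommMonoid A] [AddCommMonoid V] [AddCommMonoid W] [Module R A] [Module R V] [Module R W]
    (b : Module.Basis ι R A) (f : A →ₗ[R] V →ₗ[R] W)
    (h : ∀ s : Finset ι, ∃ v, LinearIndepOn R (fun i => f (b i) v) s) :
    Function.Injective f := by
  classical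
  intro z z' hzz'
  obtain ⟨v, hv⟩ := h ((b.repr z).support ∪ (b.repr z').support)
  have hcomb : ∀ y, f y v = Finsupp.linearCombination R (fun i => f (b i) v) (b.repr y) := by
    intro y
    conv_lhs => rw [← b.linearCombination_repr y]
    exact Finsupp.apply_linearCombination R ((LinearMap.applyₗ v).comp f) b (b.repr y)
  refine b.repr.injective (linearIndepOn_iffₛ.1 hv _ ?_ _ ?_ ?_)
  · exact fun i hi => Finset.mem_union_left _ hi
  · exact fun i hi => Finset.mem_union_right _ hi
  · rw [← hcomb, ← hcomb, hzz']

namespace FreeAlgebraPrimitive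

open Finsupp

def step (j m : ℕ) : ℕ := if j = 0 then m - 1 else (2 * j + 1) * 2 ^ m

def evalWord (u : List ℕ) (n : ℕ) : ℕ := u.foldr step n

@[simp] lemma evalWord_nil (n : ℕ) : evalWord [] n = n := rfl

@[simp] lemma evalWord_cons (j : ℕ) (u : List ℕ) (n : ℕ) :
    evalWord (j :: u) n = step j (evalWord u n) := rfl

lemma step_zero (m : ℕ) : step 0 m = m - 1 := rfl

lemma step_of_ne_zero {j : ℕ} (hj : j ≠ 0) (m : ℕ) : step j m = (2 * j + 1) * 2 ^ m :=
  if_neg hj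

lemma lt_step_of_ne_zero {j : ℕ} (hj : j ≠ 0) (m : ℕ) : m < step j m := by
  rw [step_of_ne_zero hj]
  exact (Nat.lt_two_pow_self).trans_le (Nat.le_mul_of_pos_left _ (by omega))

lemma sub_length_le_evalWord (u : List ℕ) (n : ℕ) : n - u.length ≤ evalWord u n := by
  induction u with
  | nil => simp
  | cons j u ih =>
    rw [evalWord_cons, List.length_cons]
    rcases eq_or_ne j 0 with rfl | hj
    · rw [step_zero]
      omega
    · have := lt_step_of_ne_zero hj (evalWord u n)
      omega

lemma eventually_add_lt_two_pow_sub (a c : ℕ) : ∀ᶠ n in atTop, n + a < 2 ^ (n - c) := by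
  filter_upwards [eventually_ge_atTop (2 * c + a + 1)] with n hn
  obtain ⟨m, hm⟩ : ∃ m, n - c = m + 1 := ⟨n - c - 1, by omega⟩
  have := Nat.lt_two_pow_self (n := m)
  rw [hm, pow_succ]
  omega

lemma eventually_add_lt_two_pow_evalWord (u : List ℕ) (a : ℕ) :
    ∀ᶠ n in atTop, n + a < 2 ^ evalWord u n := by
  filter_upwards [eventually_add_lt_two_pow_sub a u.length] with n hn
  exact hn.trans_le (Nat.pow_le_pow_right two_pos (sub_length_le_evalWord u n))

lemma eventually_add_lt_evalWord_cons {j : ℕ} (hj : j ≠ 0) (u : List ℕ) (a : ℕ) :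
    ∀ᶠ n in atTop, n + a < evalWord (j :: u) n := by
  filter_upwards [eventually_add_lt_two_pow_evalWord u a] with n hn
  rw [evalWord_cons, step_of_ne_zero hj]
  exact hn.trans_le (Nat.le_mul_of_pos_left _ (by omega))

lemma mul_two_pow_ne_mul_two_pow_add (c c' : ℕ) {x y a : ℕ} (ha : 0 < a) (hx : a < 2 ^ x)
    (hy : a < 2 ^ y) : c * 2 ^ x ≠ c' * 2 ^ y + a := by
  intro h
  have hdvd : 2 ^ min x y ∣ a := by
    have hx' : 2 ^ min x y ∣ c * 2 ^ x := (pow_dvd_pow 2 (min_le_left x y)).mul_left c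
    have hy' : 2 ^ min x y ∣ c' * 2 ^ y := (pow_dvd_pow 2 (min_le_right x y)).mul_left c'
    exact (Nat.dvd_add_right hy').mp (h ▸ hx')
  have := Nat.le_of_dvd ha hdvd
  rcases min_choice x y with hm | hm <;> rw [hm] at this <;> omega

lemma odd_mul_two_pow_inj {j j' x y : ℕ} (h : (2 * j + 1) * 2 ^ x = (2 * j' + 1) * 2 ^ y) :
    j = j' ∧ x = y := by
  have hxy : x = y := by
    have := congrArg (padicValNat 2) h
    simpa [padicValNat.mul, padicValNat.eq_zero_of_not_dvd, Nat.two_dvd_ne_zero] using this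
  subst hxy
  exact ⟨by simpa using h, rfl⟩

-- Leading shifts of `u` are absorbed into the offset `a`.
lemma eventually_evalWord_ne_evalWord_add (u : List ℕ) {w : List ℕ} (hw : w.head? ≠ some 0)
    {a : ℕ} (ha : 0 < a) : ∀ᶠ n in atTop, evalWord u n ≠ evalWord w n + a := by
  induction u generalizing a with
  | nil =>
    cases w with
    | nil => exact .of_forall fun n => by simp; omega
    | cons j' w =>
      filter_upwards [eventually_add_lt_evalWord_cons (by simpa using hw) w 0] with n hn
      simp only [evalWord_nil] at hn ⊢
      omega
  | cons j u ih =>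
    rcases eq_or_ne j 0 with rfl | hj
    · filter_upwards [ih (a := a + 1) (by omega)] with n hn
      rw [evalWord_cons, step_zero]
      omega
    cases w with
    | nil =>
      filter_upwards [eventually_add_lt_evalWord_cons hj u a] with n hn
      simp only [evalWord_nil]
      omega
    | cons j' w =>
      filter_upwards [eventually_add_lt_two_pow_evalWord u a,
        eventually_add_lt_two_pow_evalWord w a] with n hu hw'
      rw [evalWord_cons, evalWord_cons, step_of_ne_zero hj, step_of_ne_zero (by simpa using hw)]
      exact mul_two_pow_ne_mul_two_pow_add _ _ ha (by omega) (by omega)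

lemma eventually_pos_evalWord (u : List ℕ) : ∀ᶠ n in atTop, 0 < evalWord u n := by
  filter_upwards [eventually_gt_atTop u.length] with n hn
  have := sub_length_le_evalWord u n
  omega

lemma eventually_evalWord_zero_cons_ne (u : List ℕ) {w : List ℕ} (hw : w.head? ≠ some 0) :
    ∀ᶠ n in atTop, evalWord (0 :: u) n ≠ evalWord w n := by
  filter_upwards [eventually_evalWord_ne_evalWord_add u hw one_pos, eventually_pos_evalWord u]
    with n hne hpos
  rw [evalWord_cons, step_zero]
  omega

lemma eventually_evalWord_ne_nil {w : List ℕ} (hw : w ≠ []) :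
    ∀ᶠ n in atTop, evalWord w n ≠ evalWord [] n := by
  obtain ⟨j, u, rfl⟩ := List.exists_cons_of_ne_nil hw
  rcases eq_or_ne j 0 with rfl | hj
  · exact eventually_evalWord_zero_cons_ne u (by simp)
  · filter_upwards [eventually_add_lt_evalWord_cons hj u 0] with n hn
    exact (Nat.lt_of_add_right_lt hn).ne'

lemma eventually_evalWord_ne {w w' : List ℕ} (h : w ≠ w') :
    ∀ᶠ n in atTop, evalWord w n ≠ evalWord w' n := by
  induction w generalizing w' with
  | nil => exact (eventually_evalWord_ne_nil h.symm).mono fun _ => Ne.symm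
  | cons j u ih =>
    rcases w' with _ | ⟨j', u'⟩
    · exact eventually_evalWord_ne_nil h
    have hne : j = j' → u ≠ u' := by simpa using h
    rcases eq_or_ne j 0 with rfl | hj <;> rcases eq_or_ne j' 0 with rfl | hj'
    · filter_upwards [ih (hne rfl), eventually_pos_evalWord u,
        eventually_pos_evalWord u'] with n hn hu hu'
      rw [evalWord_cons, evalWord_cons, step_zero, step_zero]
      omega
    · exact eventually_evalWord_zero_cons_ne u (by simpa using hj')
    · exact (eventually_evalWord_zero_cons_ne u' (by simpa using hj)).mono fun _ => Ne.symm
    have hstep : ∀ x y, step j x = step j' y → j = j' ∧ x = y := fun x y hxy =>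
      odd_mul_two_pow_inj (by rwa [step_of_ne_zero hj, step_of_ne_zero hj'] at hxy)
    by_cases hjj : j = j'
    · filter_upwards [ih (hne hjj)] with n hn heq
      exact hn (hstep _ _ heq).2
    · exact .of_forall fun n heq => hjj (hstep _ _ heq).1

lemma eventually_injOn_evalWord (s : Finset (List ℕ)) :
    ∀ᶠ n in atTop, Set.InjOn (evalWord · n) s := by
  have h : ∀ p ∈ s ×ˢ s, ∀ᶠ n in atTop, p.1 ≠ p.2 → evalWord p.1 n ≠ evalWord p.2 n := by
    intro p _
    by_cases hp : p.1 = p.2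
    · exact .of_forall fun _ hne => (hne hp).elim
    · exact (eventually_evalWord_ne hp).mono fun _ hn _ => hn
  filter_upwards [(eventually_all_finset _).2 h] with n hn w hw w' hw' heq
  by_contra hne
  exact hn (w, w') (Finset.mk_mem_product hw hw') hne heq

section Letters

variable (k : Type*) [Semiring k]

noncomputable def shift : Module.End k (ℕ →₀ k) := lcomapDomain Nat.succ Nat.succ_injective

noncomputable def letterEnd (j : ℕ) : Module.End k (ℕ →₀ k) :=
  if j = 0 then shift k else lmapDomain k k (step j)

noncomputable def wordEnd (u : List ℕ) : Module.End k (ℕ →₀ k) := (u.map (letterEnd k)).prod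

variable {k}

lemma shift_pow_apply (r : ℕ) (v : ℕ →₀ k) (m : ℕ) : (shift k ^ r) v m = v (m + r) := by
  induction r generalizing m with
  | zero => rfl
  | succ r ih =>
    rw [pow_succ', Module.End.mul_apply]
    exact (ih (m + 1)).trans (by rw [add_right_comm, add_assoc])

lemma letterEnd_single {j m : ℕ} (h : j ≠ 0 ∨ m ≠ 0) (c : k) :
    letterEnd k j (single m c) = single (step j m) c := by
  unfold letterEnd
  split_ifs with hj
  · subst hj
    obtain ⟨m, rfl⟩ := Nat.exists_eq_succ_of_ne_zero (h.resolve_left (not_not.2 rfl))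
    exact comapDomain_single _ _ _ _
  · exact mapDomain_single

lemma wordEnd_single {u : List ℕ} {n : ℕ} (hn : u.length < n) (c : k) :
    wordEnd k u (single n c) = single (evalWord u n) c := by
  induction u with
  | nil => rfl
  | cons j u ih =>
    rw [List.length_cons] at hn
    have hpos := sub_length_le_evalWord u n
    rw [wordEnd, List.map_cons, List.prod_cons, Module.End.mul_apply, ← wordEnd, ih (by omega),
      letterEnd_single (by omega), evalWord_cons]

lemma exists_shift_pow_eq_single_zero {v : ℕ →₀ k} (hv : v ≠ 0) :
    ∃ r, ∃ c ≠ 0, (shift k ^ r) v = single 0 c := by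
  set M := v.support.max' (support_nonempty_iff.2 hv)
  refine ⟨M, v M, mem_support_iff.1 (Finset.max'_mem _ _), ?_⟩
  ext m
  rw [shift_pow_apply, single_apply]
  rcases eq_or_ne m 0 with rfl | hm
  · simp
  · rw [if_neg (Ne.symm hm)]
    exact notMem_support_iff.1 fun h => by have := Finset.le_max' _ _ h; omega

lemma shift_pow_single (r m : ℕ) (c : k) : (shift k ^ r) (single (m + r) c) = single m c := by
  ext i
  simp [shift_pow_apply, single_apply]

end Letters

section Simple

variable {k : Type*} [Field k] {N : Submodule k (ℕ →₀ k)}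

lemma shift_pow_mem (h0 : ∀ v ∈ N, shift k v ∈ N) (r : ℕ) {v : ℕ →₀ k} (hv : v ∈ N) :
    (shift k ^ r) v ∈ N := by
  induction r with
  | zero => exact hv
  | succ r ih => exact pow_succ' (shift k) r ▸ h0 _ ih

lemma single_zero_one_mem (hN : N ≠ ⊥) (h0 : ∀ v ∈ N, shift k v ∈ N) : single 0 1 ∈ N := by
  obtain ⟨v, hvN, hv⟩ := N.ne_bot_iff.1 hN
  obtain ⟨r, c, hc, hrc⟩ := exists_shift_pow_eq_single_zero hv
  have := N.smul_mem c⁻¹ (hrc ▸ shift_pow_mem h0 r hvN)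
  rwa [smul_single, smul_eq_mul, inv_mul_cancel₀ hc] at this

lemma eq_top_of_shift_mem_of_letterEnd_mem (hN : N ≠ ⊥) (h0 : ∀ v ∈ N, shift k v ∈ N) {j : ℕ}
    (hj : j ≠ 0) (hjN : ∀ v ∈ N, letterEnd k j v ∈ N) : N = ⊤ := by
  have hup : ∀ m, ∃ q, m ≤ q ∧ single q 1 ∈ N := by
    intro m
    induction m with
    | zero => exact ⟨0, le_rfl, single_zero_one_mem hN h0⟩
    | succ m ih =>
      obtain ⟨q, hq, hqN⟩ := ih
      refine ⟨step j q, (lt_step_of_ne_zero hj q).trans_le' hq, ?_⟩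
      exact letterEnd_single (.inl hj) (1 : k) ▸ hjN _ hqN
  have hall : ∀ m, single m 1 ∈ N := by
    intro m
    obtain ⟨q, hq, hqN⟩ := hup m
    obtain ⟨r, rfl⟩ := Nat.exists_eq_add_of_le hq
    exact shift_pow_single r m (1 : k) ▸ shift_pow_mem h0 r hqN
  rw [eq_top_iff, ← Finsupp.basisSingleOne.span_eq, Submodule.span_le]
  rintro _ ⟨m, rfl⟩
  simpa using hall m

end Simple

section Representation

variable (k : Type*) [CommSemiring k] {X : Type*} (e : X → ℕ)

noncomputable def rep : FreeAlgebra k X →ₐ[k] Module.End k (ℕ →₀ k) :=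
  FreeAlgebra.lift k (letterEnd k ∘ e)

lemma basisFreeMonoid_eq_lift (w : FreeMonoid X) :
    FreeAlgebra.basisFreeMonoid k X w = FreeMonoid.lift (FreeAlgebra.ι k) w := by
  simp [FreeAlgebra.basisFreeMonoid, FreeAlgebra.equivMonoidAlgebraFreeMonoid]

lemma rep_basisFreeMonoid (w : FreeMonoid X) :
    rep k e (FreeAlgebra.basisFreeMonoid k X w) = wordEnd k (w.toList.map e) := by
  have hlift : (rep k e).toMonoidHom.comp (FreeMonoid.lift (FreeAlgebra.ι k)) =
      FreeMonoid.lift (letterEnd k ∘ e) :=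
    FreeMonoid.hom_eq fun x => FreeAlgebra.lift_ι_apply _ x
  rw [basisFreeMonoid_eq_lift, wordEnd, List.map_map, ← FreeMonoid.lift_apply, ← hlift]
  rfl

theorem rep_injective {e : X → ℕ} (he : Function.Injective e) :
    Function.Injective (rep k e) := by
  refine LinearMap.injective_of_forall_exists_linearIndepOn (FreeAlgebra.basisFreeMonoid k X)
    (rep k e).toLinearMap fun s => ?_
  set code : FreeMonoid X → List ℕ := fun w => w.toList.map e
  have hcode : Function.Injective code :=
    (List.map_injective_iff.2 he).comp FreeMonoid.toList.injective
  obtain ⟨n, hinj, hlen⟩ := ((eventually_injOn_evalWord (s.image code)).and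
    (eventually_gt_atTop (s.sup fun w => (code w).length))).exists
  refine ⟨single n 1, ?_⟩
  have hinj' : Set.InjOn (fun w => evalWord (code w) n) s :=
    hinj.comp hcode.injOn fun w hw => Finset.mem_coe.2 (Finset.mem_image_of_mem code hw)
  refine ((linearIndependent_single_one k ℕ).linearIndepOn _).comp_of_image hinj' |>.congr ?_
  intro w hw
  simp only [AlgHom.toLinearMap_apply, rep_basisFreeMonoid]
  exact (wordEnd_single ((Finset.le_sup hw).trans_lt hlen) 1).symm

end Representation

theorem rep_exists_apply_eq {k : Type*} [Field k] {X : Type*} {e : X → ℕ} {x₀ x₁ : X}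
    (h₀ : e x₀ = 0) (h₁ : e x₁ ≠ 0) {v : ℕ →₀ k} (hv : v ≠ 0) (w : ℕ →₀ k) :
    ∃ r, rep k e r v = w := by
  set N := LinearMap.range ((LinearMap.applyₗ v).comp (rep k e).toLinearMap)
  have hmem : ∀ x, ∀ u ∈ N, letterEnd k (e x) u ∈ N := by
    rintro x _ ⟨r, rfl⟩
    exact ⟨FreeAlgebra.ι k x * r, by simp [rep]⟩
  have hN : N ≠ ⊥ := N.ne_bot_iff.2 ⟨v, ⟨1, by simp⟩, hv⟩
  have htop : N = ⊤ := eq_top_of_shift_mem_of_letterEnd_mem hN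
    (by simpa only [letterEnd, h₀, if_true] using hmem x₀) h₁ (hmem x₁)
  obtain ⟨r, hr⟩ : w ∈ N := htop ▸ Submodule.mem_top
  exact ⟨r, hr⟩

end FreeAlgebraPrimitive

/-- For every d ≥ 2, the free associative algebra on d generators over a field
is left primitive. -/
theorem freeAlgebra_d_gens_left_primitive (k : Type) [Field k] (d : ℕ) (hd : 2 ≤ d) :
    IsLeftPrimitiveRing (FreeAlgebra k (Fin d)) :=
  .of_injective_of_cyclic (FreeAlgebraPrimitive.rep k Fin.val).toRingHom
    (FreeAlgebraPrimitive.rep_injective k Fin.val_injective) fun _ hv w =>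
      FreeAlgebraPrimitive.rep_exists_apply_eq (x₀ := ⟨0, by omega⟩) (x₁ := ⟨1, hd⟩) rfl
        one_ne_zero hv w
end

section
/- A ring R with unit is left primitive if and only if R has a proper left ideal I such that I + P = R for every nonzero prime (two-sided) ideal P of R. -/
/-- A two-sided ideal P is prime if P ≠ R and for two-sided ideals a, b,
ab ⊆ P implies a ⊆ P or b ⊆ P. -/
def TwoSidedIdeal.IsPrimeIdeal {R : Type*} [Ring R] (P : TwoSidedIdeal R) : Prop :=
  P ≠ ⊤ ∧ ∀ a b : TwoSidedIdeal R,
    (∀ x ∈ a, ∀ y ∈ b, x * y ∈ P) → (∀ x ∈ a, x ∈ P) ∨ (∀ y ∈ b, y ∈ P)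

section

variable {R M : Type*} [Ring R] [AddCommGroup M] [Module R M]

theorem TwoSidedIdeal.asIdeal_eq_bot {P : TwoSidedIdeal R} : P.asIdeal = ⊥ ↔ P = ⊥ := by
  simp only [SetLike.ext_iff, TwoSidedIdeal.mem_asIdeal, Submodule.mem_bot, TwoSidedIdeal.mem_bot]

theorem TwoSidedIdeal.sup_asIdeal_eq_top_iff {I : Ideal R} {P : TwoSidedIdeal R} :
    I ⊔ P.asIdeal = ⊤ ↔ ∀ r : R, ∃ a ∈ I, ∃ p ∈ P, r = a + p := by
  simp only [Submodule.eq_top_iff', Submodule.mem_sup, TwoSidedIdeal.mem_asIdeal]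
  exact forall_congr' fun r ↦ by simp only [eq_comm]

theorem TwoSidedIdeal.asIdeal_le_annihilator_of_le_ker {P : TwoSidedIdeal R} {m : M}
    (hm : Function.Surjective (LinearMap.toSpanSingleton R M m))
    (hP : P.asIdeal ≤ LinearMap.ker (LinearMap.toSpanSingleton R M m)) :
    P.asIdeal ≤ Module.annihilator R M := by
  intro p hp
  refine Module.mem_annihilator.mpr fun w ↦ ?_
  obtain ⟨r, rfl⟩ := hm w
  have hpr : (p * r) • m = 0 := hP (P.mul_mem_right p r (TwoSidedIdeal.mem_asIdeal.mp hp))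
  simpa [mul_smul] using hpr

theorem Module.annihilator_quotient_le (J : Ideal R) : Module.annihilator R (R ⧸ J) ≤ J := by
  intro t ht
  have := Module.mem_annihilator.mp ht (Submodule.Quotient.mk 1)
  rwa [← Submodule.Quotient.mk_smul, smul_eq_mul, mul_one, Submodule.Quotient.mk_eq_zero] at this

theorem IsSimpleModule.isPrimeIdeal_annihilator [IsSimpleModule R M] :
    (Module.annihilator R M).toTwoSided.IsPrimeIdeal := by
  have := IsSimpleModule.nontrivial R M
  refine ⟨fun h ↦ ?_, fun a b hab ↦ ?_⟩
  · have htop := congrArg TwoSidedIdeal.asIdeal h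
    rw [Ideal.asIdeal_toTwoSided, TwoSidedIdeal.top_asIdeal,
      Module.annihilator_eq_top_iff] at htop
    exact not_subsingleton M htop
  simp only [Ideal.mem_toTwoSided, Module.mem_annihilator] at hab ⊢
  by_contra! h
  obtain ⟨⟨x, hxa, w, hxw⟩, ⟨y, hyb, m, hym⟩⟩ := h
  -- `y • m` generates `M`, so `w = r • y • m` and `x • w = ((x * r) * y) • m` with `x * r ∈ a`.
  obtain ⟨r, rfl⟩ := IsSimpleModule.toSpanSingleton_surjective R hym w
  apply hxw
  simpa [mul_smul] using hab (x * r) (a.mul_mem_right x r hxa) y hyb m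

theorem exists_ideal_ne_top_sup_asIdeal_eq_top [IsSimpleModule R M] [FaithfulSMul R M] :
    ∃ I : Ideal R, I ≠ ⊤ ∧ ∀ P : TwoSidedIdeal R, P ≠ ⊥ → I ⊔ P.asIdeal = ⊤ := by
  have := IsSimpleModule.nontrivial R M
  obtain ⟨m, hm⟩ := exists_ne (0 : M)
  have hmax := IsSimpleModule.ker_toSpanSingleton_isMaximal R hm
  refine ⟨_, hmax.ne_top, fun P hP ↦ ?_⟩
  rw [← codisjoint_iff, ← (Ideal.isMaximal_def.mp hmax).not_le_iff_codisjoint]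
  intro hle
  have hann := P.asIdeal_le_annihilator_of_le_ker
    (IsSimpleModule.toSpanSingleton_surjective R hm) hle
  rw [Module.annihilator_eq_bot.mpr ‹_›, le_bot_iff, TwoSidedIdeal.asIdeal_eq_bot] at hann
  exact hP hann

theorem faithfulSMul_quotient_of_le_of_sup_asIdeal_eq_top {I J : Ideal R} (hJ : J.IsMaximal)
    (hIJ : I ≤ J) (h : ∀ P : TwoSidedIdeal R, P.IsPrimeIdeal → P ≠ ⊥ → I ⊔ P.asIdeal = ⊤) :
    FaithfulSMul R (R ⧸ J) := by
  have := isSimpleModule_iff_isCoatom.mpr (Ideal.isMaximal_def.mp hJ)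
  rw [← Module.annihilator_eq_bot]
  by_contra hne
  refine hJ.ne_top (top_le_iff.mp ?_)
  have hsup := h _ IsSimpleModule.isPrimeIdeal_annihilator
    (by rwa [ne_eq, ← TwoSidedIdeal.asIdeal_eq_bot, Ideal.asIdeal_toTwoSided])
  rw [Ideal.asIdeal_toTwoSided] at hsup
  exact hsup ▸ sup_le hIJ (Module.annihilator_quotient_le J)

end

/-- A ring with unit is left primitive iff it has a proper left ideal I such that
I + P = R for every nonzero prime two-sided ideal P. -/
theorem isLeftPrimitiveRing_iff_exists_left_ideal_comaximal_with_primes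
    (R : Type*) [Ring R] :
    IsLeftPrimitiveRing R ↔
      ∃ I : Submodule R R, I ≠ ⊤ ∧
        ∀ P : TwoSidedIdeal R, P.IsPrimeIdeal → P ≠ ⊥ →
          ∀ r : R, ∃ a ∈ I, ∃ p ∈ P, r = a + p := by
  simp only [← TwoSidedIdeal.sup_asIdeal_eq_top_iff]
  constructor
  · rintro ⟨M, _, _, _, _⟩
    obtain ⟨I, hI, h⟩ := exists_ideal_ne_top_sup_asIdeal_eq_top (R := R) (M := M)
    exact ⟨I, hI, fun P _ hP ↦ h P hP⟩
  · rintro ⟨I, hI, h⟩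
    obtain ⟨J, hJ, hIJ⟩ := Ideal.exists_le_maximal I hI
    exact ⟨R ⧸ J, _, _, isSimpleModule_iff_isCoatom.mpr (Ideal.isMaximal_def.mp hJ),
      faithfulSMul_quotient_of_le_of_sup_asIdeal_eq_top hJ hIJ h⟩
end

section
/- Let A = ℂ[x]/(x³) and let B be the subalgebra of A generated by the image of x². Then A is nearly free as a left B-module (witnessed by the set E = {1, x̄} where x̄ is the image of x), but A is not free as a left B-module. -/
/-!
Write `x` for the image of `X` in `A = K[X]/(X³)`. Since `(x²)² = 0`, the subalgebra
`B = K[x²]` is just `K·1 ⊕ K·x²`. Hence `c₀ + c₁x + c₂x² = (c₀ + c₂x²)·1 + c₁·x`, and for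
`b = d₀ + d₂x²`, `c = e₀ + e₂x²` in `B` we get `b·1 + c·x = d₀ + e₀x + d₂x²` because `x³ = 0`;
so `b·1 + c·x = 0` forces `b = 0` and `c·x = 0`. But a free `B`-module has `K`-dimension divisible
by `dim_K B = 2`, whereas `dim_K A = 3`.
-/

open Polynomial

section PairSum

variable {A S : Type*} [AddCommMonoid A] [Mul A] [SetLike S A] {B : S} {u v : A}

theorem exists_finset_sum_mul_eq_of_pair (huv : u ≠ v) {a b c : A} (hb : b ∈ B) (hc : c ∈ B)
    (ha : a = b * u + c * v) :
    ∃ (s : Finset A) (f : A → A), ↑s ⊆ ({u, v} : Set A) ∧ (∀ x ∈ s, f x ∈ B) ∧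
      a = ∑ x ∈ s, f x * x := by
  classical
  refine ⟨{u, v}, fun x => if x = u then b else c, by simp, ?_, ?_⟩
  · simp only [Finset.mem_insert, Finset.mem_singleton]
    rintro x (rfl | rfl) <;> simp [huv.symm, hb, hc]
  · simp [Finset.sum_pair huv, huv.symm, ha]

theorem mul_eq_zero_of_sum_eq_zero_of_subset_pair (huv : u ≠ v)
    (hpair : ∀ b ∈ B, ∀ c ∈ B, b * u + c * v = 0 → b * u = 0 ∧ c * v = 0)
    {s : Finset A} {f : A → A} (hs : ↑s ⊆ ({u, v} : Set A)) (hf : ∀ x ∈ s, f x ∈ B)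
    (hsum : ∑ x ∈ s, f x * x = 0) {x : A} (hx : x ∈ s) : f x * x = 0 := by
  classical
  obtain rfl | rfl | rfl | rfl : s = ∅ ∨ s = {u} ∨ s = {v} ∨ s = {u, v} := by
    simpa only [Finset.coe_eq_empty, Finset.coe_eq_singleton, Finset.coe_eq_pair] using
      Set.subset_pair_iff_eq.1 hs
  · simp at hx
  · rwa [Finset.mem_singleton.1 hx, ← Finset.sum_singleton (fun x => f x * x)]
  · rwa [Finset.mem_singleton.1 hx, ← Finset.sum_singleton (fun x => f x * x)]
  · rw [Finset.sum_pair huv] at hsum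
    obtain ⟨hu, hv⟩ := hpair _ (hf u (by simp)) _ (hf v (by simp)) hsum
    rcases Finset.mem_insert.1 hx with rfl | hx
    · exact hu
    · rwa [Finset.mem_singleton.1 hx]

end PairSum

namespace Algebra

variable {R A : Type*} [CommSemiring R] [Semiring A] [Algebra R A] {a : A}

theorem toSubmodule_adjoin_singleton_of_sq_eq_zero (ha : a ^ 2 = 0) :
    Subalgebra.toSubmodule (adjoin R {a}) = Submodule.span R {1, a} := by
  rw [adjoin_eq_span]
  refine le_antisymm (Submodule.span_le.2 ?_) (Submodule.span_le.2 ?_)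
  · intro _ hx
    obtain ⟨n, rfl⟩ := Submonoid.mem_closure_singleton.1 hx
    match n with
    | 0 => exact Submodule.subset_span (by simp)
    | 1 => exact Submodule.subset_span (by simp)
    | n + 2 => simp [pow_add, ha]
  · exact Set.insert_subset_iff.2 ⟨Submodule.subset_span (Submonoid.one_mem _),
      Set.singleton_subset_iff.2 (Submodule.subset_span (Submonoid.subset_closure rfl))⟩

theorem mem_adjoin_singleton_of_sq_eq_zero (ha : a ^ 2 = 0) {b : A} :
    b ∈ adjoin R {a} ↔ ∃ c d : R, c • 1 + d • a = b := by
  rw [← Subalgebra.mem_toSubmodule, toSubmodule_adjoin_singleton_of_sq_eq_zero ha,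
    Submodule.mem_span_pair]

theorem finrank_adjoin_singleton_of_sq_eq_zero [Nontrivial R] [StrongRankCondition R]
    (ha : a ^ 2 = 0) (hli : LinearIndependent R ![1, a]) : Module.finrank R (adjoin R {a}) = 2 := by
  rw [← Subalgebra.finrank_toSubmodule, toSubmodule_adjoin_singleton_of_sq_eq_zero ha,
    ← Matrix.range_cons_cons_empty 1 a ![], finrank_span_eq_card hli, Fintype.card_fin]

end Algebra

namespace AdjoinRoot

variable {R : Type*} [CommRing R]

local notation "x" => root (X ^ 3 : R[X])

theorem root_X_pow_pow_self (n : ℕ) : root (X ^ n : R[X]) ^ n = 0 := by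
  simpa using eval₂_root (X ^ n : R[X])

theorem root_X_pow_three_sq_sq : (x ^ 2) ^ 2 = 0 := by
  rw [show (x ^ 2) ^ 2 = x ^ 3 * x by ring, root_X_pow_pow_self, zero_mul]

section Nontrivial

variable [Nontrivial R]

variable (R) in
noncomputable def basisXPow (n : ℕ) : Module.Basis (Fin n) R (AdjoinRoot (X ^ n : R[X])) :=
  (powerBasis' (monic_X_pow n)).basis.reindex (finCongr (natDegree_X_pow n))

theorem basisXPow_apply (n : ℕ) (i : Fin n) :
    basisXPow R n i = root (X ^ n : R[X]) ^ (i : ℕ) := by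
  rw [basisXPow, Module.Basis.reindex_apply, PowerBasis.coe_basis, powerBasis'_gen]
  rfl

theorem exists_eq_smul_one_add_smul_root_add_smul_root_sq (a : AdjoinRoot (X ^ 3 : R[X])) :
    ∃ c₀ c₁ c₂ : R, a = c₀ • 1 + c₁ • x + c₂ • x ^ 2 := by
  have := (basisXPow R 3).sum_repr a
  simp only [Fin.sum_univ_three, basisXPow_apply] at this
  exact ⟨_, _, _, by simpa using this.symm⟩

theorem eq_zero_of_smul_one_add_smul_root_add_smul_root_sq_eq_zero {c₀ c₁ c₂ : R}
    (h : c₀ • 1 + c₁ • x + c₂ • x ^ 2 = 0) : c₀ = 0 ∧ c₁ = 0 ∧ c₂ = 0 := by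
  have hli := Fintype.linearIndependent_iff.1 (basisXPow R 3).linearIndependent ![c₀, c₁, c₂]
  simp only [Fin.sum_univ_three, basisXPow_apply] at hli
  have := hli (by simpa using h)
  exact ⟨this 0, this 1, this 2⟩

theorem one_ne_root_X_pow_three : (1 : AdjoinRoot (X ^ 3 : R[X])) ≠ x := by
  intro h
  have : (1 : R) • (1 : AdjoinRoot (X ^ 3 : R[X])) + (-1 : R) • x + (0 : R) • x ^ 2 = 0 := by
    rw [← h]; simp
  exact one_ne_zero (eq_zero_of_smul_one_add_smul_root_add_smul_root_sq_eq_zero this).1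

theorem linearIndependent_one_root_X_pow_three_sq : LinearIndependent R ![1, x ^ 2] :=
  LinearIndependent.pair_iff.2 fun s t h => by
    have := eq_zero_of_smul_one_add_smul_root_add_smul_root_sq_eq_zero
      (show s • 1 + (0 : R) • x + t • x ^ 2 = 0 by simpa using h)
    exact ⟨this.1, this.2.2⟩

theorem exists_mem_adjoin_root_sq_eq_mul_one_add_mul_root (a : AdjoinRoot (X ^ 3 : R[X])) :
    ∃ b ∈ Algebra.adjoin R {x ^ 2}, ∃ c ∈ Algebra.adjoin R {x ^ 2}, a = b * 1 + c * x := by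
  obtain ⟨c₀, c₁, c₂, rfl⟩ := exists_eq_smul_one_add_smul_root_add_smul_root_sq a
  refine ⟨c₀ • 1 + c₂ • x ^ 2, ?_, c₁ • 1, ?_, ?_⟩
  · exact (Algebra.mem_adjoin_singleton_of_sq_eq_zero root_X_pow_three_sq_sq).2 ⟨c₀, c₂, rfl⟩
  · exact (Algebra.mem_adjoin_singleton_of_sq_eq_zero root_X_pow_three_sq_sq).2 ⟨c₁, 0, by simp⟩
  · simp only [mul_one, smul_one_mul]
    abel

theorem mul_eq_zero_of_mul_one_add_mul_root_eq_zero {b c : AdjoinRoot (X ^ 3 : R[X])}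
    (hb : b ∈ Algebra.adjoin R {x ^ 2}) (hc : c ∈ Algebra.adjoin R {x ^ 2})
    (h : b * 1 + c * x = 0) : b * 1 = 0 ∧ c * x = 0 := by
  obtain ⟨d₀, d₂, rfl⟩ := (Algebra.mem_adjoin_singleton_of_sq_eq_zero root_X_pow_three_sq_sq).1 hb
  obtain ⟨e₀, e₂, rfl⟩ := (Algebra.mem_adjoin_singleton_of_sq_eq_zero root_X_pow_three_sq_sq).1 hc
  have hcx : (e₀ • 1 + e₂ • x ^ 2) * x = e₀ • x := by
    rw [add_mul, smul_mul_assoc, smul_mul_assoc, one_mul, ← pow_succ, root_X_pow_pow_self,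
      smul_zero, add_zero]
  rw [hcx, mul_one] at h ⊢
  obtain ⟨rfl, rfl, rfl⟩ := eq_zero_of_smul_one_add_smul_root_add_smul_root_sq_eq_zero
    (show d₀ • 1 + e₀ • x + d₂ • x ^ 2 = 0 by rw [← h]; abel)
  simp

end Nontrivial

section Field

variable (K : Type*) [Field K]

theorem finrank_X_pow (n : ℕ) : Module.finrank K (AdjoinRoot (X ^ n : K[X])) = n := by
  rw [Module.finrank_eq_card_basis (basisXPow K n), Fintype.card_fin]

theorem not_free_adjoin_root_X_pow_three_sq :
    ¬ Module.Free (Algebra.adjoin K {root (X ^ 3 : K[X]) ^ 2}) (AdjoinRoot (X ^ 3 : K[X])) := by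
  intro hfree
  have : Nontrivial (AdjoinRoot (X ^ 3 : K[X])) :=
    Module.nontrivial_of_finrank_eq_succ (finrank_X_pow K 3)
  have : Module.Free K (Algebra.adjoin K {root (X ^ 3 : K[X]) ^ 2}) := .of_divisionRing K _
  have hdvd := Module.finrank_dvd_finrank_right K (Algebra.adjoin K {root (X ^ 3 : K[X]) ^ 2})
    (AdjoinRoot (X ^ 3 : K[X]))
  rw [finrank_X_pow, Algebra.finrank_adjoin_singleton_of_sq_eq_zero root_X_pow_three_sq_sq
    linearIndependent_one_root_X_pow_three_sq] at hdvd
  norm_num at hdvd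

end Field

end AdjoinRoot

open Polynomial in
/-- Let A = ℂ[x]/(x³) and B the subalgebra generated by the image of x².  Then A is
nearly free as a left B-module, witnessed by E = {1, x̄}, but A is not free as a
left B-module. -/
theorem cx_mod_x_cubed_nearly_free_not_free :
    let A := Polynomial ℂ ⧸ Ideal.span {(X : Polynomial ℂ) ^ 3}
    let xbar : A := Ideal.Quotient.mk _ (X : Polynomial ℂ)
    let B : Subalgebra ℂ A := Algebra.adjoin ℂ {xbar ^ 2}
    let E : Set A := {1, xbar}
    -- A is nearly free as a left B-module, witnessed by E:
    ((1 : A) ∈ E ∧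
      (∀ a : A, ∃ (s : Finset A) (f : A → A), ↑s ⊆ E ∧ (∀ x ∈ s, f x ∈ B) ∧
        a = ∑ x ∈ s, f x * x) ∧
      (∀ (s : Finset A) (f : A → A), ↑s ⊆ E → (∀ x ∈ s, f x ∈ B) →
        ∑ x ∈ s, f x * x = 0 → ∀ x ∈ s, f x * x = 0)) ∧
    -- but A is not free as a left B-module:
    ¬ Module.Free ↥B A := by
  intro A xbar B E
  -- `A` is `AdjoinRoot (X ^ 3)` and `xbar` its `root` by definition, so the lemmas apply as stated.
  refine ⟨⟨Set.mem_insert _ _, fun a => ?_, fun s f hs hf hsum x hx => ?_⟩,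
    AdjoinRoot.not_free_adjoin_root_X_pow_three_sq ℂ⟩
  · obtain ⟨b, hb, c, hc, ha⟩ := AdjoinRoot.exists_mem_adjoin_root_sq_eq_mul_one_add_mul_root a
    exact exists_finset_sum_mul_eq_of_pair AdjoinRoot.one_ne_root_X_pow_three hb hc ha
  · exact mul_eq_zero_of_sum_eq_zero_of_subset_pair AdjoinRoot.one_ne_root_X_pow_three
      (fun b hb c hc => AdjoinRoot.mul_eq_zero_of_mul_one_add_mul_root_eq_zero hb hc) hs hf hsum hx
end

section
/- Let A be a prime ring and B a right primitive subring of A such that (1) A is nearly free as a left B-module and (2) every nonzero two-sided ideal I of A satisfies I ∩ B ≠ 0. Then A is right primitive. -/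
/-- A ring is right primitive if it admits a faithful simple right module. -/
def IsRightPrimitiveRing.{u} (R : Type u) [Ring R] : Prop :=
  ∃ (M : Type u) (_ : AddCommGroup M) (_ : Module Rᵐᵒᵖ M),
    IsSimpleModule Rᵐᵒᵖ M ∧ FaithfulSMul Rᵐᵒᵖ M

/-- A is nearly free as a left B-module, witnessed by a set E. -/
def IsNearlyFree {A : Type*} [Ring A] (B : Subring A) (E : Set A) : Prop :=
  (1 : A) ∈ E ∧
  (∀ a : A, ∃ (s : Finset A) (f : A → A), ↑s ⊆ E ∧ (∀ x ∈ s, f x ∈ B) ∧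
    a = ∑ x ∈ s, f x * x) ∧
  (∀ (s : Finset A) (f : A → A), ↑s ⊆ E → (∀ x ∈ s, f x ∈ B) →
    ∑ x ∈ s, f x * x = 0 → ∀ x ∈ s, f x * x = 0)

/-!
Right ideals of `R` are encoded as `Submodule Rᵐᵒᵖ R`. A ring is right primitive iff it has a
maximal right ideal whose core (the largest two-sided ideal inside it) is zero. Near-freeness of
`A` over `B` gives a left `B`-linear retraction `p : A → B`, the coefficient of `1`. For a maximal
right ideal `ρ` of `B` with zero core, the right ideal `{a | p (a A) ⊆ ρ}` of `A` contains `ρ` and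
misses `1`, so some maximal right ideal `𝔪` of `A` contains it, and then `𝔪 ∩ B = ρ`. A nonzero
core of `𝔪` would meet `B` in some `c ≠ 0`, and `B c ⊆ 𝔪 ∩ B = ρ` would put `c` in the core of `ρ`.
-/

open MulOpposite

namespace Submodule

variable {R : Type*} [Ring R]

-- Makes `Submodule Rᵐᵒᵖ R` coatomic, i.e. proper right ideals lie in maximal ones.
instance : Module.Finite Rᵐᵒᵖ R :=
  .of_surjective (LinearMap.toSpanSingleton Rᵐᵒᵖ R 1) fun a => ⟨op a, by simp⟩

theorem eq_top_iff_one_mem {ρ : Submodule Rᵐᵒᵖ R} : ρ = ⊤ ↔ (1 : R) ∈ ρ :=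
  ⟨fun h => h ▸ mem_top, fun h => eq_top_iff'.2 fun x => by simpa using ρ.smul_mem (op x) h⟩

/-- The largest two-sided ideal contained in the right ideal `ρ`. -/
def rightCore (ρ : Submodule Rᵐᵒᵖ R) : TwoSidedIdeal R :=
  TwoSidedIdeal.mk' {c | ∀ x, x * c ∈ ρ} (by simp)
    (fun hc hd x => by simpa [mul_add] using ρ.add_mem (hc x) (hd x))
    (fun hc x => by simpa using ρ.neg_mem (hc x))
    (fun {y c} hc x => by simpa [mul_assoc] using hc (x * y))
    (fun {c y} hc x => by simpa [mul_assoc] using ρ.smul_mem (op y) (hc x))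

theorem mem_rightCore {ρ : Submodule Rᵐᵒᵖ R} {c : R} : c ∈ ρ.rightCore ↔ ∀ x, x * c ∈ ρ :=
  TwoSidedIdeal.mem_mk' ..

theorem op_mem_annihilator_quotient_iff {ρ : Submodule Rᵐᵒᵖ R} {c : R} :
    op c ∈ Module.annihilator Rᵐᵒᵖ (R ⧸ ρ) ↔ c ∈ ρ.rightCore := by
  rw [Module.mem_annihilator, mem_rightCore, (Quotient.mk_surjective ρ).forall]
  simp only [← Quotient.mk_smul, Quotient.mk_eq_zero, op_smul_eq_mul]

theorem faithfulSMul_quotient_iff {ρ : Submodule Rᵐᵒᵖ R} :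
    FaithfulSMul Rᵐᵒᵖ (R ⧸ ρ) ↔ ρ.rightCore = ⊥ := by
  simp only [← Module.annihilator_eq_bot, eq_bot_iff, SetLike.le_def, Submodule.mem_bot,
    TwoSidedIdeal.mem_bot, op_surjective.forall, op_mem_annihilator_quotient_iff, op_eq_zero_iff]

end Submodule

theorem isRightPrimitiveRing_iff_exists_isCoatom {R : Type*} [Ring R] :
    IsRightPrimitiveRing R ↔ ∃ ρ : Submodule Rᵐᵒᵖ R, IsCoatom ρ ∧ ρ.rightCore = ⊥ := by
  constructor
  · rintro ⟨M, _, _, _, _⟩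
    have := IsSimpleModule.nontrivial Rᵐᵒᵖ M
    obtain ⟨m, hm⟩ := exists_ne (0 : M)
    let f : R →ₗ[Rᵐᵒᵖ] M :=
      { toFun r := op r • m
        map_add' r s := by simp [add_smul]
        map_smul' c r := by simp [mul_smul] }
    have hf : Function.Surjective f := fun y =>
      have ⟨r, hr⟩ := IsSimpleModule.toSpanSingleton_surjective Rᵐᵒᵖ hm y
      ⟨unop r, hr⟩
    let e := f.quotKerEquivOfSurjective hf
    refine ⟨LinearMap.ker f, isSimpleModule_iff_isCoatom.1 (IsSimpleModule.congr e), ?_⟩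
    rw [← Submodule.faithfulSMul_quotient_iff, ← Module.annihilator_eq_bot, e.annihilator_eq,
      Module.annihilator_eq_bot]
    infer_instance
  · rintro ⟨ρ, hρ, hcore⟩
    exact ⟨R ⧸ ρ, inferInstance, inferInstance, isSimpleModule_iff_isCoatom.2 hρ,
      Submodule.faithfulSMul_quotient_iff.2 hcore⟩

namespace IsNearlyFree

variable {A : Type*} [Ring A] {B : Subring A} {E : Set A}

theorem span_eq_top (hNF : IsNearlyFree B E) : Submodule.span B E = ⊤ := by
  refine Submodule.eq_top_iff'.2 fun a => ?_
  obtain ⟨s, f, hsE, hfB, rfl⟩ := hNF.2.1 a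
  exact Submodule.sum_mem _ fun x hx =>
    Submodule.smul_mem _ (⟨f x, hfB x hx⟩ : B) (Submodule.subset_span (hsE hx))

theorem mul_eq_zero_of_linearCombination_eq_zero (hNF : IsNearlyFree B E) {g : E →₀ B}
    (hg : Finsupp.linearCombination B ((↑) : E → A) g = 0) (x : E) : (g x : A) * x = 0 := by
  classical
  by_cases hx : x ∈ g.support
  · let f (a : A) : A := if h : a ∈ E then g ⟨a, h⟩ else 0
    have hfB (a : A) : f a ∈ B := by
      unfold f; split
      · exact (g _).2
      · exact zero_mem B
    have hsum : ∑ a ∈ g.support.map (Function.Embedding.subtype _), f a * a = 0 := by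
      simpa [f, Finsupp.linearCombination_apply, Finsupp.sum, Subring.smul_def] using hg
    simpa [f] using hNF.2.2 _ f (by simp) (fun a _ => hfB a) hsum x (by simpa using hx)
  · simp [Finsupp.notMem_support_iff.1 hx]

theorem exists_retraction (hNF : IsNearlyFree B E) : ∃ p : A →ₗ[B] B, ∀ b : B, p b = b := by
  let L : (E →₀ B) →ₗ[B] A := Finsupp.linearCombination B (↑)
  have hL : Function.Surjective L := by
    rw [← LinearMap.range_eq_top, Finsupp.range_linearCombination, Subtype.range_coe,
      hNF.span_eq_top]
  let coeffOne : (E →₀ B) →ₗ[B] B := Finsupp.lapply ⟨1, hNF.1⟩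
  have hker : LinearMap.ker L ≤ LinearMap.ker coeffOne := fun g hg => by
    simpa [coeffOne] using hNF.mul_eq_zero_of_linearCombination_eq_zero hg ⟨1, hNF.1⟩
  refine ⟨(LinearMap.ker L).liftQ coeffOne hker ∘ₗ
    (L.quotKerEquivOfSurjective hL).symm.toLinearMap, fun b => ?_⟩
  have hb : L (Finsupp.single ⟨1, hNF.1⟩ b) = b := by
    simp [L, Subring.smul_def]
  rw [LinearMap.comp_apply, ← hb, LinearEquiv.coe_coe,
    ← LinearMap.quotKerEquivOfSurjective_apply_mk L hL, LinearEquiv.symm_apply_apply]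
  simp [coeffOne]

end IsNearlyFree

namespace Submodule

variable {A : Type*} [Ring A] {B : Subring A}

def comapSubring (𝔪 : Submodule Aᵐᵒᵖ A) (B : Subring A) : Submodule Bᵐᵒᵖ B where
  carrier := {b | (b : A) ∈ 𝔪}
  add_mem' ha hb := 𝔪.add_mem ha hb
  zero_mem' := 𝔪.zero_mem
  smul_mem' c _ hb := 𝔪.smul_mem (op ((unop c : B) : A)) hb

theorem mem_comapSubring {𝔪 : Submodule Aᵐᵒᵖ A} {b : B} : b ∈ 𝔪.comapSubring B ↔ (b : A) ∈ 𝔪 :=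
  Iff.rfl

theorem rightCore_eq_bot_of_comapSubring_le
    (hmeet : ∀ I : TwoSidedIdeal A, I ≠ ⊥ → ∃ x ∈ I, x ∈ B ∧ x ≠ 0)
    {𝔪 : Submodule Aᵐᵒᵖ A} {ρ : Submodule Bᵐᵒᵖ B} (h𝔪ρ : 𝔪.comapSubring B ≤ ρ)
    (hρ : ρ.rightCore = ⊥) : 𝔪.rightCore = ⊥ := by
  by_contra h𝔪
  obtain ⟨c, hc𝔪, hcB, hc0⟩ := hmeet _ h𝔪
  have hcρ : (⟨c, hcB⟩ : B) ∈ ρ.rightCore :=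
    mem_rightCore.2 fun x => h𝔪ρ (mem_rightCore.1 hc𝔪 x)
  rw [hρ, TwoSidedIdeal.mem_bot] at hcρ
  exact hc0 (congrArg Subtype.val hcρ)

theorem exists_isCoatom_comapSubring_eq (p : A →ₗ[B] B) (hp : ∀ b : B, p b = b)
    {ρ : Submodule Bᵐᵒᵖ B} (hρ : IsCoatom ρ) :
    ∃ 𝔪 : Submodule Aᵐᵒᵖ A, IsCoatom 𝔪 ∧ 𝔪.comapSubring B = ρ := by
  let T : Submodule Aᵐᵒᵖ A :=
    { carrier := {a | ∀ c, p (a * c) ∈ ρ}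
      add_mem' := fun ha hb c => by simpa [add_mul] using ρ.add_mem (ha c) (hb c)
      zero_mem' := fun c => by simp
      smul_mem' := fun d a ha c => by simpa [mul_assoc] using ha (unop d * c) }
  have hρT : ρ ≤ T.comapSubring B := fun b hb c => by
    rw [← smul_eq_mul, ← Subring.smul_def, p.map_smul]
    exact ρ.smul_mem (op (p c)) hb
  have hp1 : p 1 = 1 := by simpa using hp 1
  have hT : T ≠ ⊤ := fun hT => hρ.1 <| eq_top_iff_one_mem.2 <| by
    simpa [hp1] using (hT ▸ mem_top : (1 : A) ∈ T) 1
  obtain ⟨𝔪, h𝔪, hT𝔪⟩ := (eq_top_or_exists_le_coatom T).resolve_left hT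
  refine ⟨𝔪, h𝔪, (hρ.le_iff.1 (hρT.trans fun b hb => hT𝔪 hb)).resolve_left fun h => ?_⟩
  have h1 : (1 : B) ∈ 𝔪.comapSubring B := h ▸ mem_top
  exact h𝔪.1 (eq_top_iff_one_mem.2 (mem_comapSubring.1 h1))

end Submodule

theorem rightPrimitive_of_nearlyFree_subring_general
    (A : Type*) [Ring A] (B : Subring A) (E : Set A)
    (hBprim : IsRightPrimitiveRing ↥B)
    (hNF : IsNearlyFree B E)
    (hmeet : ∀ I : TwoSidedIdeal A, I ≠ ⊥ → ∃ x ∈ I, x ∈ B ∧ x ≠ 0) :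
    IsRightPrimitiveRing A := by
  obtain ⟨ρ, hρ, hρcore⟩ := isRightPrimitiveRing_iff_exists_isCoatom.1 hBprim
  obtain ⟨p, hp⟩ := hNF.exists_retraction
  obtain ⟨𝔪, h𝔪, h𝔪ρ⟩ := Submodule.exists_isCoatom_comapSubring_eq p hp hρ
  exact isRightPrimitiveRing_iff_exists_isCoatom.2
    ⟨𝔪, h𝔪, Submodule.rightCore_eq_bot_of_comapSubring_le hmeet h𝔪ρ.le hρcore⟩

/-- If A is a prime ring and B is a right primitive subring such that A is nearly
free as a left B-module and every nonzero two-sided ideal of A meets B nontrivially,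
then A is right primitive. -/
theorem rightPrimitive_of_nearlyFree_subring
    (A : Type*) [Ring A] (B : Subring A) (E : Set A)
    (hprime : ∀ I J : TwoSidedIdeal A, I ≠ ⊥ → J ≠ ⊥ → ∃ x ∈ I, ∃ y ∈ J, x * y ≠ 0)
    (hBprim : IsRightPrimitiveRing ↥B)
    (hNF : IsNearlyFree B E)
    (hmeet : ∀ I : TwoSidedIdeal A, I ≠ ⊥ → ∃ x ∈ I, x ∈ B ∧ x ≠ 0) :
    IsRightPrimitiveRing A :=
  rightPrimitive_of_nearlyFree_subring_general A B E hBprim hNF hmeet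
end

section
/- Let A be a prime ring, B a subring, I a maximal right ideal of B containing no nonzero two-sided ideal of B, and suppose A is nearly free as a left B-module via a set E containing 1. Then IA = Σ_{x∈E} Ix is a proper right ideal of A. -/
/-!
Every element of `IA` is a finite sum `∑ bₓ x` with `bₓ ∈ I` and `x ∈ E`: a product `b a` with
`b ∈ I` expands along `E` with coefficients `b b'ₓ ∈ I`, since `I` is a right ideal. If `1 ∈ IA`,
compare `1 = ∑ bₓ x` with the trivial expression `1 = 1 · 1` (recall `1 ∈ E`): near freeness
forces `(b₁ - 1) · 1 = 0`, so `1 = b₁ ∈ I` and `I = B`, contradicting the maximality of `I`.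
-/

section

variable {A : Type*} [Ring A] {B : Subring A} {E : Set A} {I : Submodule (↥B)ᵐᵒᵖ ↥B}

def idealCombinations (E : Set A) (I : Submodule (↥B)ᵐᵒᵖ ↥B) : AddSubmonoid A where
  carrier := {a | ∃ (s : Finset A) (f : A → ↥B), ↑s ⊆ E ∧ (∀ x ∈ s, f x ∈ I) ∧
    a = ∑ x ∈ s, (f x : A) * x}
  zero_mem' := ⟨∅, 0, by simp, by simp, by simp⟩
  add_mem' := by
    classical
    rintro _ _ ⟨s, f, hsE, hfI, rfl⟩ ⟨t, g, htE, hgI, rfl⟩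
    let f' : A → ↥B := fun x => if x ∈ s then f x else 0
    let g' : A → ↥B := fun x => if x ∈ t then g x else 0
    have extend : ∀ (u : Finset A) (h : A → ↥B), u ⊆ s ∪ t →
        ∑ x ∈ u, (h x : A) * x = ∑ x ∈ s ∪ t, ((if x ∈ u then h x else 0 : ↥B) : A) * x := by
      intro u h hu
      simp only [apply_ite Subtype.val, ZeroMemClass.coe_zero, ite_mul, zero_mul,
        Finset.sum_ite_mem, Finset.inter_eq_right.mpr hu]
    refine ⟨s ∪ t, f' + g', by simpa using ⟨hsE, htE⟩, fun x _ => I.add_mem ?_ ?_, ?_⟩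
    · by_cases hx : x ∈ s <;> simp [f', hx, hfI]
    · by_cases hx : x ∈ t <;> simp [g', hx, hgI]
    · simp only [Pi.add_apply, Subring.coe_add, add_mul, Finset.sum_add_distrib,
        extend s f Finset.subset_union_left, extend t g Finset.subset_union_right, f', g']

theorem mul_mem_idealCombinations {b : ↥B} (hb : b ∈ I) {x : A} (hx : x ∈ E) :
    (b : A) * x ∈ idealCombinations E I :=
  ⟨{x}, fun _ => b, by simpa using hx, fun _ _ => hb, by simp⟩

theorem idealCombinations_le_span :
    idealCombinations E I ≤ (Submodule.span Aᵐᵒᵖ (Subtype.val '' (I : Set ↥B))).toAddSubmonoid := by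
  rintro _ ⟨s, f, -, hfI, rfl⟩
  refine sum_mem fun x hx => ?_
  exact Submodule.smul_mem _ (MulOpposite.op x) (Submodule.subset_span ⟨f x, hfI x hx, rfl⟩)

namespace IsNearlyFree

theorem coe_mul_mem_idealCombinations (hNF : IsNearlyFree B E) {b : ↥B} (hb : b ∈ I) (a : A) :
    (b : A) * a ∈ idealCombinations E I := by
  obtain ⟨s, g, hsE, hgB, rfl⟩ := hNF.2.1 a
  rw [Finset.mul_sum]
  refine sum_mem fun x hx => ?_
  have hbg : b * ⟨g x, hgB x hx⟩ ∈ I := I.smul_mem (MulOpposite.op ⟨g x, hgB x hx⟩) hb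
  simpa [mul_assoc] using mul_mem_idealCombinations hbg (hsE hx)

theorem mul_mem_idealCombinations_right (hNF : IsNearlyFree B E) {a : A}
    (ha : a ∈ idealCombinations E I) (c : A) : a * c ∈ idealCombinations E I := by
  obtain ⟨s, f, -, hfI, rfl⟩ := ha
  rw [Finset.sum_mul]
  exact sum_mem fun x hx => by
    simpa [mul_assoc] using hNF.coe_mul_mem_idealCombinations (hfI x hx) (x * c)

theorem mem_span_iff_mem_idealCombinations (hNF : IsNearlyFree B E) (a : A) :
    a ∈ Submodule.span Aᵐᵒᵖ (Subtype.val '' (I : Set ↥B)) ↔ a ∈ idealCombinations E I := by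
  refine ⟨fun ha => ?_, fun ha => idealCombinations_le_span ha⟩
  induction ha using Submodule.span_induction with
  | mem _ hx =>
    obtain ⟨b, hb, rfl⟩ := hx
    simpa using mul_mem_idealCombinations hb hNF.1
  | zero => exact zero_mem _
  | add _ _ _ _ hx hy => exact add_mem hx hy
  | smul c _ _ hx => exact hNF.mul_mem_idealCombinations_right hx c.unop

theorem one_notMem_idealCombinations (hNF : IsNearlyFree B E) (hI : I ≠ ⊤) :
    (1 : A) ∉ idealCombinations E I := by
  classical
  rintro ⟨s, f, hsE, hfI, h1⟩
  let f₀ : A → ↥B := fun x => if x ∈ s then f x else 0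
  have hf₀I : f₀ 1 ∈ I := by by_cases h : (1 : A) ∈ s <;> simp [f₀, h, hfI]
  let g : A → A := fun x => f₀ x - if x = 1 then 1 else 0
  have hsum : ∑ x ∈ insert 1 s, g x * x = 0 := by
    simp only [g, f₀, sub_mul, Finset.sum_sub_distrib, apply_ite Subtype.val,
      ZeroMemClass.coe_zero, ite_mul, zero_mul, one_mul, Finset.sum_ite_mem,
      Finset.inter_eq_right.mpr (Finset.subset_insert 1 s),
      Finset.sum_ite_eq', Finset.mem_insert_self, if_true, ← h1, sub_self]
  have hg1 := hNF.2.2 (insert 1 s) g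
    (by rw [Finset.coe_insert]; exact Set.insert_subset hNF.1 hsE)
    (fun x _ => B.sub_mem (f₀ x).2 (by split_ifs <;> simp [B.one_mem])) hsum 1
    (Finset.mem_insert_self 1 s)
  have hf₀1 : f₀ 1 = 1 := Subtype.ext (by simpa [g, sub_eq_zero] using hg1)
  have h1I : (1 : ↥B) ∈ I := hf₀1 ▸ hf₀I
  exact hI (eq_top_iff.mpr fun b _ => by simpa using I.smul_mem (MulOpposite.op b) h1I)

end IsNearlyFree

end

theorem IA_proper_right_ideal_general
    (A : Type*) [Ring A] (B : Subring A) (E : Set A)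
    (I : Submodule (↥B)ᵐᵒᵖ ↥B) (hImax : IsCoatom I)
    (hNF : IsNearlyFree B E) :
    (∀ a : A, a ∈ Submodule.span Aᵐᵒᵖ (Subtype.val '' (I : Set ↥B)) ↔
        ∃ (s : Finset A) (f : A → ↥B), ↑s ⊆ E ∧ (∀ x ∈ s, f x ∈ I) ∧
          a = ∑ x ∈ s, (f x : A) * x) ∧
    Submodule.span Aᵐᵒᵖ (Subtype.val '' (I : Set ↥B)) ≠ ⊤ := by
  refine ⟨hNF.mem_span_iff_mem_idealCombinations, fun htop => ?_⟩
  apply hNF.one_notMem_idealCombinations hImax.1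
  rw [← hNF.mem_span_iff_mem_idealCombinations, htop]
  exact Submodule.mem_top

/-- If A is prime, B a subring, I a maximal right ideal of B containing no nonzero
two-sided ideal of B, and A is nearly free as a left B-module via E ∋ 1, then
IA = Σ_{x ∈ E} Ix is a proper right ideal of A. -/
theorem IA_proper_right_ideal
    (A : Type*) [Ring A] (B : Subring A) (E : Set A)
    (hprime : ∀ I J : TwoSidedIdeal A, I ≠ ⊥ → J ≠ ⊥ → ∃ x ∈ I, ∃ y ∈ J, x * y ≠ 0)
    (I : Submodule (↥B)ᵐᵒᵖ ↥B) (hImax : IsCoatom I)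
    (hInoideal : ∀ J : TwoSidedIdeal ↥B, (∀ x ∈ J, x ∈ I) → J = ⊥)
    (hNF : IsNearlyFree B E) :
    (∀ a : A, a ∈ Submodule.span Aᵐᵒᵖ (Subtype.val '' (I : Set ↥B)) ↔
        ∃ (s : Finset A) (f : A → ↥B), ↑s ⊆ E ∧ (∀ x ∈ s, f x ∈ I) ∧
          a = ∑ x ∈ s, (f x : A) * x) ∧
    Submodule.span Aᵐᵒᵖ (Subtype.val '' (I : Set ↥B)) ≠ ⊤ :=
  IA_proper_right_ideal_general A B E I hImax hNF
end

section
/- Let A be a monomial algebra over a field k, i.e., A = k⟨x₁,…,x_n⟩/I with I generated by monomials. Suppose there is a single word b such that every word with nonzero image in A is a subword (factor) of b^m for some m ≥ 0. Then the number of words of length n with nonzero image in A is at most the length of b (for n ≥ 1), and consequently A has Gelfand–Kirillov dimension at most 1. -/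
/-!
A factor of a power of `b` is determined by its length and by its starting position modulo
`b.length`, so each positive length carries at most `b.length` nonzero words. The monomials of
length at most `N` therefore span a space of dimension at most `1 + N * b.length`, and
`log (C * N) / log N → 1`.
-/

open Filter

theorem List.getElem_flatten_replicate {α : Type*} (b : List α) (hb : 0 < b.length) {m i : ℕ}
    (hi : i < ((List.replicate m b).flatten).length) :
    ((List.replicate m b).flatten)[i] = b[i % b.length]'(Nat.mod_lt _ hb) := by
  induction m generalizing i with
  | zero => simp at hi
  | succ m ih =>
    simp only [List.replicate_succ, List.flatten_cons] at hi ⊢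
    rcases lt_or_ge i b.length with h | h
    · simp only [List.getElem_append_left h, Nat.mod_eq_of_lt h]
    · rw [List.getElem_append_right h, ih]
      simp only [Nat.mod_eq_sub_mod h]

theorem List.getElem_of_append_append_eq_flatten_replicate {α : Type*} {b s u t : List α}
    (hb : 0 < b.length) {m : ℕ} (heq : s ++ u ++ t = (List.replicate m b).flatten)
    {j : ℕ} (hj : j < u.length) :
    u[j] = b[(s.length + j) % b.length]'(Nat.mod_lt _ hb) := by
  have hlt : s.length + j < (s ++ u ++ t).length := by simp only [List.length_append]; omega
  rw [← List.getElem_flatten_replicate b hb (heq ▸ hlt), List.getElem_of_eq heq.symm]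
  simp [List.getElem_append_left, hj]

theorem encard_setOf_infix_flatten_replicate_le {α : Type*} (b : List α) {N : ℕ}
    (hN : N ≠ 0) :
    {u : List α | u.length = N ∧ ∃ m, u <:+: (List.replicate m b).flatten}.encard
      ≤ b.length := by
  rcases b.length.eq_zero_or_pos with hb | hb
  · obtain rfl := List.length_eq_zero_iff.mp hb
    refine le_of_eq (Set.encard_eq_zero.mpr ?_)
    ext u
    simp only [List.flatten_replicate_nil, List.infix_nil, exists_const, Set.mem_ofPred_eq,
      Set.mem_empty_iff_false, iff_false, not_and]
    rintro rfl rfl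
    exact hN rfl
  · calc _ ≤ ((fun i => List.ofFn fun j : Fin N => b[(i + j) % b.length]'(Nat.mod_lt _ hb)) ''
            Set.Iio b.length).encard := by
          refine Set.encard_le_encard ?_
          rintro u ⟨rfl, m, s, t, heq⟩
          refine ⟨s.length % b.length, Nat.mod_lt _ hb, List.ext_getElem (by simp) ?_⟩
          intro j _ hj
          rw [List.getElem_of_append_append_eq_flatten_replicate hb heq hj]
          simp [Nat.mod_add_mod]
      _ ≤ (Set.Iio b.length).encard := Set.encard_image_le _ _
      _ = b.length := by
          rw [← Finset.coe_range, Set.encard_coe_eq_coe_finsetCard, Finset.card_range]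

theorem encard_setOf_length_le_le_one_add_mul {α : Type*} (p : List α → Prop) {L : ℕ}
    (h : ∀ N, N ≠ 0 → {u : List α | u.length = N ∧ p u}.encard ≤ L) (N : ℕ) :
    {u : List α | u.length ≤ N ∧ p u}.encard ≤ 1 + N * L := by
  induction N with
  | zero =>
    calc _ ≤ ({[]} : Set (List α)).encard :=
          Set.encard_le_encard fun u hu => List.eq_nil_of_length_eq_zero (Nat.le_zero.mp hu.1)
      _ ≤ 1 + (0 : ℕ) * L := by simp
  | succ N ih =>
    have hsplit : {u : List α | u.length ≤ N + 1 ∧ p u} ⊆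
        {u | u.length ≤ N ∧ p u} ∪ {u | u.length = N + 1 ∧ p u} := by
      rintro u ⟨hle, hp⟩
      rcases Nat.lt_or_eq_of_le hle with hlt | heq
      · exact Or.inl ⟨Nat.le_of_lt_succ hlt, hp⟩
      · exact Or.inr ⟨heq, hp⟩
    calc _ ≤ _ := Set.encard_le_encard hsplit
      _ ≤ _ := Set.encard_union_le _ _
      _ ≤ (1 + N * L : ℕ) + L := add_le_add ih (h _ N.succ_ne_zero)
      _ = (1 + (N + 1) * L : ℕ) := by push_cast; ring

theorem finrank_span_image_le_encard {ι k V : Type*} [DivisionRing k] [AddCommGroup V]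
    [Module k V] (f : ι → V) (s : Set ι) :
    (Module.finrank k (Submodule.span k (f '' s)) : ℕ∞) ≤ {i ∈ s | f i ≠ 0}.encard := by
  have hspan : Submodule.span k (f '' s) = Submodule.span k (f '' {i ∈ s | f i ≠ 0}) := by
    rw [← Submodule.span_sdiff_singleton_zero]
    congr 1
    ext
    aesop
  rw [hspan]
  obtain hfin | hinf := {i ∈ s | f i ≠ 0}.finite_or_infinite
  · have := (hfin.image f).fintype
    calc _ ≤ ((f '' {i ∈ s | f i ≠ 0}).toFinset.card : ℕ∞) := by
          exact_mod_cast finrank_span_le_card _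
      _ = (f '' {i ∈ s | f i ≠ 0}).encard := (Set.encard_eq_coe_toFinset_card _).symm
      _ ≤ _ := Set.encard_image_le _ _
  · simp [hinf.encard_eq]

theorem log_div_log_le_one_add_of_le_mul {d C N : ℕ} (hN : 2 ≤ N) (hd : d ≤ C * N) :
    Real.log d / Real.log N ≤ 1 + Real.log C / Real.log N := by
  have hlogN : 0 < Real.log N := Real.log_pos (by exact_mod_cast hN)
  rw [← div_self hlogN.ne', ← add_div, div_le_div_iff_of_pos_right hlogN]
  rcases d.eq_zero_or_pos with rfl | hd0
  · simpa using add_nonneg hlogN.le (Real.log_natCast_nonneg C)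
  · have hC : C ≠ 0 := by rintro rfl; omega
    rw [← Real.log_mul (by positivity) (by exact_mod_cast hC), mul_comm]
    exact Real.log_le_log (by exact_mod_cast hd0) (by exact_mod_cast hd)

theorem limsup_log_div_log_le_one_of_le_mul {d : ℕ → ℕ} {C : ℕ}
    (h : ∀ᶠ N in atTop, d N ≤ C * N) :
    limsup (fun N : ℕ => Real.log (d N) / Real.log N) atTop ≤ 1 := by
  have hlim : Tendsto (fun N : ℕ => 1 + Real.log C / Real.log N) atTop (nhds 1) := by
    simpa using tendsto_const_nhds.add <| tendsto_const_nhds.div_atTop <|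
      Real.tendsto_log_atTop.comp tendsto_natCast_atTop_atTop
  calc _ ≤ limsup (fun N : ℕ => 1 + Real.log C / Real.log N) atTop := by
        refine limsup_le_limsup ?_ (isCoboundedUnder_le_of_le atTop (x := 0) fun N => ?_)
          hlim.isBoundedUnder_le
        · filter_upwards [h, eventually_ge_atTop 2] with N hd hN
          exact log_div_log_le_one_add_of_le_mul hN hd
        · exact div_nonneg (Real.log_natCast_nonneg _) (Real.log_natCast_nonneg _)
    _ = 1 := hlim.limsup_eq

open Filter in
/-- Let A = k⟨x₁,…,x_n⟩/I be a monomial algebra (I generated by the monomials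
corresponding to a set W of words).  If there is a word b such that every word with
nonzero image in A is a subword of some bᵐ, then for every N ≥ 1 the number of
words of length N with nonzero image in A is at most the length of b, and A has
Gelfand–Kirillov dimension at most 1 (computed with the generating subspace spanned
by the images of the generators). -/
theorem monomial_algebra_gk_dim_le_one
    (k : Type) [Field k] (n : ℕ) (W : Set (List (Fin n))) (b : List (Fin n)) :
    let mono : List (Fin n) → FreeAlgebra k (Fin n) :=
      fun w => (w.map (FreeAlgebra.ι k)).prod
    let r : FreeAlgebra k (Fin n) → FreeAlgebra k (Fin n) → Prop :=
      fun a c => ∃ w ∈ W, a = mono w ∧ c = 0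
    let π : FreeAlgebra k (Fin n) →ₐ[k] RingQuot r := RingQuot.mkAlgHom k r
    (∀ u : List (Fin n), π (mono u) ≠ 0 →
        ∃ m : ℕ, u <:+: (List.replicate m b).flatten) →
    (∀ N : ℕ, 1 ≤ N →
        Set.ncard {u : List (Fin n) | u.length = N ∧ π (mono u) ≠ 0} ≤ b.length) ∧
    Filter.limsup
        (fun N : ℕ =>
          Real.log (Module.finrank k
            ↥(Submodule.span k (π '' (mono '' {u : List (Fin n) | u.length ≤ N})))) /
            Real.log N)
        Filter.atTop ≤ 1 := by
  intro mono r π hcov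
  have hcount : ∀ N, N ≠ 0 → {u | u.length = N ∧ π (mono u) ≠ 0}.encard ≤ b.length :=
    fun N hN => calc
      _ ≤ {u | u.length = N ∧ ∃ m, u <:+: (List.replicate m b).flatten}.encard :=
        Set.encard_le_encard fun u hu => ⟨hu.1, hcov u hu.2⟩
      _ ≤ b.length := encard_setOf_infix_flatten_replicate_le b hN
  refine ⟨fun N hN => (Set.encard_le_coe_iff_finite_ncard_le.mp (hcount N (by omega))).2, ?_⟩
  refine limsup_log_div_log_le_one_of_le_mul (C := b.length + 1) ?_
  filter_upwards [eventually_ge_atTop 1] with N hN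
  have hdim := (finrank_span_image_le_encard (k := k) (π ∘ mono) {u | u.length ≤ N}).trans
    (encard_setOf_length_le_le_one_add_mul _ hcount N)
  rw [Set.image_comp] at hdim
  calc Module.finrank k (Submodule.span k (π '' (mono '' {u | u.length ≤ N})))
      ≤ 1 + N * b.length := by exact_mod_cast hdim
    _ ≤ (b.length + 1) * N := by nlinarith
end

section
/- Let M be a submonoid of a free monoid Σ* that is free on a single generator b (i.e., M = {b^m : m ≥ 0}). If every word v ∈ Σ* has the property that wvt ∈ M for some words w, t, then every word in Σ* is a subword of b^m for some m, and the number of such words of any fixed positive length n is at most the length of b. -/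
/-!
A factor `v` of a power of `b` that starts at position `p` is determined by `|v|` and by
`p mod |b|`, since the `k`-th letter of a power of `b` is the `(k mod |b|)`-th letter of `b`.
So the words of length `n` that occur in powers of `b` are among the `|b|` factors of length `n`
of `bⁿ⁺¹` starting at positions `0, …, |b| - 1`.
-/

namespace List

variable {S : Type*}

theorem getElem?_flatten_replicate (b : List S) {m p : ℕ} (hp : p < m * b.length) :
    (replicate m b).flatten[p]? = b[p % b.length]? := by
  induction m generalizing p with
  | zero => simp at hp
  | succ m ih =>
    rw [replicate_succ, flatten_cons]
    by_cases hpb : p < b.length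
    · rw [getElem?_append_left hpb, Nat.mod_eq_of_lt hpb]
    · push Not at hpb
      rw [getElem?_append_right hpb, ih (by rw [Nat.succ_mul] at hp; omega),
        ← Nat.mod_eq_sub_mod hpb]

def periodicFactor (b : List S) (i n : ℕ) : List S :=
  ((replicate (n + 1) b).flatten.drop i).take n

theorem exists_eq_periodicFactor_of_infix {b v : List S} {m : ℕ}
    (hv : v <:+: (replicate m b).flatten) (hv₀ : v ≠ []) :
    ∃ i < b.length, v = periodicFactor b i v.length := by
  obtain ⟨w, t, hwvt⟩ := hv
  have hlen : w.length + (v.length + t.length) = m * b.length := by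
    simpa [mul_comm] using congrArg length hwvt
  have hb : 0 < b.length := by
    by_contra! hb
    simp_all
  have hw : w.length % b.length < b.length := Nat.mod_lt _ hb
  refine ⟨_, hw, ext_getElem? fun k => ?_⟩
  by_cases hk : k < v.length
  · have hv_k : v[k]? = (replicate m b).flatten[w.length + k]? := by
      rw [← hwvt, append_assoc, getElem?_append_right (Nat.le_add_right _ _),
        Nat.add_sub_cancel_left, getElem?_append_left hk]
    have hpower : w.length % b.length + k < (v.length + 1) * b.length := by
      nlinarith
    rw [hv_k, periodicFactor, getElem?_take_of_lt hk, getElem?_drop,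
      getElem?_flatten_replicate b (by omega), getElem?_flatten_replicate b hpower,
      Nat.mod_add_mod]
  · push Not at hk
    rw [getElem?_eq_none hk, periodicFactor, getElem?_eq_none ((length_take_le _ _).trans hk)]

end List

theorem words_subwords_of_power_of_single_generator_general
    {S : Type*} (b : List S) (M : Set (List S))
    (hM : M = {w : List S | ∃ m : ℕ, w = (List.replicate m b).flatten})
    (h : ∀ v : List S, ∃ w t : List S, w ++ v ++ t ∈ M) :
    (∀ v : List S, ∃ m : ℕ, v <:+: (List.replicate m b).flatten) ∧
    ∀ n : ℕ, 0 < n → Set.ncard {v : List S | v.length = n} ≤ b.length := by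
  subst hM
  have hinfix (v : List S) : ∃ m : ℕ, v <:+: (List.replicate m b).flatten := by
    obtain ⟨w, t, m, hm⟩ := h v
    exact ⟨m, w, t, hm⟩
  refine ⟨hinfix, fun n hn => ?_⟩
  have hsub : {v : List S | v.length = n} ⊆ (b.periodicFactor · n) '' Set.Iio b.length := by
    rintro v rfl
    obtain ⟨m, hm⟩ := hinfix v
    obtain ⟨i, hi, hvi⟩ := List.exists_eq_periodicFactor_of_infix hm (List.ne_nil_of_length_pos hn)
    exact ⟨i, hi, hvi.symm⟩
  calc Set.ncard {v : List S | v.length = n}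
      ≤ ((b.periodicFactor · n) '' Set.Iio b.length).ncard :=
        Set.ncard_le_ncard hsub ((Set.finite_Iio _).image _)
    _ ≤ (Set.Iio b.length).ncard := Set.ncard_image_le (Set.finite_Iio _)
    _ = b.length := by simp

/-- Let M = {bᵐ : m ≥ 0} be the submonoid of Σ* freely generated by a single word b.
If every word v satisfies wvt ∈ M for some words w, t, then every word is a subword
(contiguous factor) of some bᵐ, and for each positive length n there are at most
(length of b) many words of length n. -/
theorem words_subwords_of_power_of_single_generator
    {S : Type*} [Finite S] (b : List S) (M : Set (List S))
    (hM : M = {w : List S | ∃ m : ℕ, w = (List.replicate m b).flatten})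
    (h : ∀ v : List S, ∃ w t : List S, w ++ v ++ t ∈ M) :
    (∀ v : List S, ∃ m : ℕ, v <:+: (List.replicate m b).flatten) ∧
    ∀ n : ℕ, 0 < n → Set.ncard {v : List S | v.length = n} ≤ b.length :=
  words_subwords_of_power_of_single_generator_general b M hM h
end

section
/- Let k be a field and A = k⟨x₁,…,x_n⟩/I a monomial algebra (I generated by words). Suppose B is a subalgebra of A spanned by a set S of (images of) words, E is a set of words containing the empty word with A = Σ_{x∈E} Bx, and every word with nonzero image in A factors uniquely as bx with b ∈ S and x ∈ E. Then for any b₁,…,b_d ∈ B and distinct x₁,…,x_d ∈ E with b₁x₁ + ⋯ + b_d x_d = 0 in A, each bᵢxᵢ = 0; i.e., A is nearly free as a left B-module. -/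
/-!
The words with no factor in `W` ("reduced" words) form a `k`-basis of `A = k⟨X⟩/(W)`. The
coordinate map is obtained by letting the free algebra act on `k[words]`, each letter prepending
itself and killing the result when it acquires a factor in `W`; this action kills `W`, so it
descends to `A`, and evaluating it at the empty word gives the normal form of an element.
For `b` in the span of the `S`-words, the normal form of `b * x` is supported on reduced words
`t ++ x` with `t ∈ S`. Reduced words are nonzero in `A`, so by unique factorisation these supports
are disjoint for distinct `x ∈ E`, and a vanishing sum `∑ bᵢ * xᵢ` vanishes termwise.
-/

theorem Finsupp.eq_zero_of_sum_eq_zero_of_pairwise_disjoint {ι α M : Type*} [AddCommMonoid M]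
    {g : ι → α →₀ M} (s : Finset ι)
    (hg : Pairwise fun i j => Disjoint (g i).support (g j).support)
    (hsum : ∑ i ∈ s, g i = 0) {i : ι} (hi : i ∈ s) : g i = 0 := by
  classical
  have hsupp := Finsupp.support_sum_eq_biUnion s fun _ _ hij => hg hij
  rw [hsum, Finsupp.support_zero] at hsupp
  exact Finsupp.support_eq_empty.mp
    (Finset.subset_empty.mp (hsupp ▸ Finset.subset_biUnion_of_mem (fun i => (g i).support) hi))

namespace FreeAlgebra

variable (k : Type*) [CommSemiring k] {X : Type*}

def word (u : List X) : FreeAlgebra k X :=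
  (u.map (ι k)).prod

@[simp]
theorem word_append (u v : List X) : word k (u ++ v) = word k u * word k v := by
  simp [word]

theorem span_range_word : Submodule.span k (Set.range (word k (X := X))) = ⊤ := by
  have hclosure : Submonoid.closure (Set.range (ι k (X := X))) ≤
      MonoidHom.mrange (FreeMonoid.lift (ι k)) :=
    Submonoid.closure_le.mpr fun _ ⟨x, hx⟩ => ⟨.of x, by simpa using hx⟩
  rw [eq_top_iff, ← Algebra.top_toSubmodule, ← adjoin_range_ι, Algebra.adjoin_eq_span]
  refine Submodule.span_mono fun a ha => ?_
  obtain ⟨w, rfl⟩ := hclosure ha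
  exact ⟨w.toList, by simp [word, FreeMonoid.lift_apply]⟩

end FreeAlgebra

def MonomialAlgebra.rel (k : Type*) [CommSemiring k] {X : Type*} (W : Set (List X))
    (a c : FreeAlgebra k X) : Prop :=
  ∃ w ∈ W, a = FreeAlgebra.word k w ∧ c = 0

abbrev MonomialAlgebra (k : Type*) [CommSemiring k] {X : Type*} (W : Set (List X)) :=
  RingQuot (MonomialAlgebra.rel k W)

namespace MonomialAlgebra

open FreeAlgebra Finsupp Classical

section

variable (k : Type*) [CommSemiring k] {X : Type*} (W : Set (List X))

def ofWord (u : List X) : MonomialAlgebra k W :=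
  RingQuot.mkAlgHom k (rel k W) (word k u)

def HasFactorIn (u : List X) : Prop :=
  ∃ w ∈ W, w <:+: u

noncomputable def prependLetter (i : X) : Module.End k (List X →₀ k) :=
  lsum k fun u => if HasFactorIn W (i :: u) then 0 else lsingle (i :: u)

noncomputable def wordRep : FreeAlgebra k X →ₐ[k] Module.End k (List X →₀ k) :=
  lift k (prependLetter k W)

end

variable {k : Type*} [CommSemiring k] {X : Type*} {W : Set (List X)}

theorem HasFactorIn.cons {u : List X} (i : X) (hu : HasFactorIn W u) :
    HasFactorIn W (i :: u) :=
  let ⟨w, hw, hwu⟩ := hu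
  ⟨w, hw, List.infix_cons hwu⟩

theorem ofWord_append (u v : List X) :
    ofWord k W (u ++ v) = ofWord k W u * ofWord k W v := by
  simp [ofWord]

theorem ofWord_nil : ofWord k W [] = 1 := by
  simp [ofWord, word]

theorem ofWord_eq_zero_of_mem {w : List X} (hw : w ∈ W) : ofWord k W w = 0 :=
  (RingQuot.mkAlgHom_rel k ⟨w, hw, rfl, rfl⟩).trans (map_zero _)

theorem ofWord_eq_zero_of_hasFactorIn {u : List X} (hu : HasFactorIn W u) :
    ofWord k W u = 0 := by
  obtain ⟨w, hw, s, t, rfl⟩ := hu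
  rw [ofWord_append, ofWord_append, ofWord_eq_zero_of_mem hw, mul_zero, zero_mul]

theorem subsingleton_of_nil_mem (hW : [] ∈ W) : Subsingleton (MonomialAlgebra k W) :=
  subsingleton_of_zero_eq_one (ofWord_nil.symm.trans (ofWord_eq_zero_of_mem hW)).symm

theorem span_range_ofWord : Submodule.span k (Set.range (ofWord k W)) = ⊤ := by
  have hrange : Set.range (ofWord k W) =
      (RingQuot.mkAlgHom k (rel k W)).toLinearMap '' Set.range (word k) :=
    Set.range_comp _ _
  rw [hrange, Submodule.span_image, span_range_word, Submodule.map_top, LinearMap.range_eq_top]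
  exact RingQuot.mkAlgHom_surjective k _

theorem prependLetter_single (i : X) (v : List X) (a : k) :
    prependLetter k W i (single v a) =
      if HasFactorIn W (i :: v) then 0 else single (i :: v) a := by
  rw [prependLetter, lsum_single]
  split_ifs <;> rfl

theorem wordRep_word_single (u v : List X) (a : k) :
    wordRep k W (word k u) (single v a) =
      if u ≠ [] ∧ HasFactorIn W (u ++ v) then 0 else single (u ++ v) a := by
  induction u with
  | nil => simp [wordRep, word]
  | cons i u ih =>
    have hword : word k (i :: u) = ι k i * word k u := List.prod_cons
    rw [hword, map_mul, Module.End.mul_apply, ih, wordRep, lift_ι_apply]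
    by_cases hu : u ≠ [] ∧ HasFactorIn W (u ++ v)
    · rw [if_pos hu, map_zero, if_pos ⟨List.cons_ne_nil i u, hu.2.cons i⟩]
    · rw [if_neg hu, prependLetter_single]
      simp

theorem wordRep_word_eq_zero (hW : [] ∉ W) {w : List X} (hw : w ∈ W) :
    wordRep k W (word k w) = 0 := by
  refine lhom_ext fun v a => ?_
  rw [wordRep_word_single, if_pos ⟨fun h => hW (h ▸ hw), w, hw, List.infix_append [] w v⟩,
    LinearMap.zero_apply]

variable (k) in
noncomputable def normalForm (hW : [] ∉ W) : MonomialAlgebra k W →ₗ[k] (List X →₀ k) :=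
  (LinearMap.applyₗ (single [] 1)).comp
    (RingQuot.liftAlgHom k ⟨wordRep k W, by
      rintro _ _ ⟨w, hw, rfl, rfl⟩
      rw [wordRep_word_eq_zero hW hw, map_zero]⟩).toLinearMap

theorem normalForm_ofWord (hW : [] ∉ W) (u : List X) :
    normalForm k hW (ofWord k W u) = if HasFactorIn W u then 0 else single u 1 := by
  have hnil : ¬HasFactorIn W [] := fun ⟨w, hw, hw_nil⟩ => hW (List.infix_nil.mp hw_nil ▸ hw)
  have hcond : (u ≠ [] ∧ HasFactorIn W u) ↔ HasFactorIn W u :=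
    ⟨And.right, fun hu => ⟨by rintro rfl; exact hnil hu, hu⟩⟩
  simp only [normalForm, ofWord, LinearMap.coe_comp, Function.comp_apply, AlgHom.toLinearMap_apply,
    RingQuot.liftAlgHom_mkAlgHom_apply, LinearMap.applyₗ_apply_apply, wordRep_word_single,
    List.append_nil, hcond]

theorem linearCombination_normalForm (hW : [] ∉ W) (a : MonomialAlgebra k W) :
    linearCombination k (ofWord k W) (normalForm k hW a) = a := by
  suffices (linearCombination k (ofWord k W)).comp (normalForm k hW) = LinearMap.id from
    LinearMap.congr_fun this a
  refine LinearMap.ext_on_range span_range_ofWord fun u => ?_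
  by_cases hu : HasFactorIn W u
  · simp [ofWord_eq_zero_of_hasFactorIn hu]
  · simp [normalForm_ofWord, hu]

theorem ofWord_ne_zero [Nontrivial k] {u : List X} (hu : ¬HasFactorIn W u) :
    ofWord k W u ≠ 0 := by
  have hW : [] ∉ W := fun h => hu ⟨[], h, List.nil_infix⟩
  intro h
  have hnf := normalForm_ofWord (k := k) hW u
  rw [h, map_zero, if_neg hu] at hnf
  exact one_ne_zero (single_eq_zero.mp hnf.symm)

theorem support_normalForm_mul_ofWord (hW : [] ∉ W) {S : Set (List X)} {b : MonomialAlgebra k W}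
    (hb : b ∈ Submodule.span k (ofWord k W '' S)) (x : List X) :
    ↑(normalForm k hW (b * ofWord k W x)).support ⊆
      {u | ¬HasFactorIn W u ∧ ∃ t ∈ S, u = t ++ x} := by
  induction hb using Submodule.span_induction with
  | mem _ hb =>
    obtain ⟨t, ht, rfl⟩ := hb
    rw [← ofWord_append, normalForm_ofWord]
    split_ifs with hbad
    · simp
    · refine (Finset.coe_subset.mpr support_single_subset).trans ?_
      rw [Finset.coe_singleton, Set.singleton_subset_iff]
      exact ⟨hbad, t, ht, rfl⟩
  | zero => simp
  | add b c _ _ hb hc =>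
    rw [add_mul, map_add]
    refine (Finset.coe_subset.mpr support_add).trans ?_
    rw [Finset.coe_union]
    exact Set.union_subset hb hc
  | smul a b _ hb =>
    rw [smul_mul_assoc, map_smul]
    exact (Finset.coe_subset.mpr support_smul).trans hb

variable (k W) in
def FactorsUniquely (S E : Set (List X)) : Prop :=
  ∀ u, ofWord k W u ≠ 0 →
    ∃! p : List X × List X, p.1 ∈ S ∧ p.2 ∈ E ∧ u = p.1 ++ p.2

variable [Nontrivial k] {S E : Set (List X)}

theorem disjoint_support_normalForm (hfac : FactorsUniquely k W S E) (hW : [] ∉ W)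
    {b b' : MonomialAlgebra k W} (hb : b ∈ Submodule.span k (ofWord k W '' S))
    (hb' : b' ∈ Submodule.span k (ofWord k W '' S))
    {x x' : List X} (hx : x ∈ E) (hx' : x' ∈ E) (hxx' : x ≠ x') :
    Disjoint (normalForm k hW (b * ofWord k W x)).support
      (normalForm k hW (b' * ofWord k W x')).support := by
  refine Finset.disjoint_left.mpr fun u hu hu' => hxx' ?_
  obtain ⟨hgood, t, ht, rfl⟩ := support_normalForm_mul_ofWord hW hb x hu
  obtain ⟨-, t', ht', heq⟩ := support_normalForm_mul_ofWord hW hb' x' hu'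
  have hfactor := (hfac _ (ofWord_ne_zero hgood)).unique (y₁ := (t, x)) (y₂ := (t', x'))
    ⟨ht, hx, rfl⟩ ⟨ht', hx', heq⟩
  exact congrArg Prod.snd hfactor

theorem mul_ofWord_eq_zero_of_sum_eq_zero (hfac : FactorsUniquely k W S E) {ι : Type*}
    [Fintype ι] {b : ι → MonomialAlgebra k W} {x : ι → List X}
    (hb : ∀ i, b i ∈ Submodule.span k (ofWord k W '' S)) (hx : ∀ i, x i ∈ E)
    (hinj : Function.Injective x) (hsum : ∑ i, b i * ofWord k W (x i) = 0) (i : ι) :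
    b i * ofWord k W (x i) = 0 := by
  by_cases hW : [] ∈ W
  · have := subsingleton_of_nil_mem (k := k) hW
    exact Subsingleton.elim _ _
  have hnf : normalForm k hW (b i * ofWord k W (x i)) = 0 :=
    Finsupp.eq_zero_of_sum_eq_zero_of_pairwise_disjoint Finset.univ
      (fun j j' hjj' => disjoint_support_normalForm hfac hW (hb j) (hb j') (hx j) (hx j')
        (hinj.ne hjj'))
      (by rw [← map_sum, hsum, map_zero]) (Finset.mem_univ i)
  rw [← linearCombination_normalForm hW (b i * _), hnf, map_zero]

end MonomialAlgebra

/-- Let A = k⟨x₁,…,x_n⟩/I be a monomial algebra, B a subalgebra spanned by the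
images of a set S of words, and E a set of words containing the empty word such that
A = Σ_{x∈E} B·x and every word with nonzero image in A factors uniquely as b ++ x
with b ∈ S and x ∈ E.  Then any relation b₁x₁ + ⋯ + b_d x_d = 0 with bᵢ ∈ B and
distinct xᵢ ∈ E forces each bᵢxᵢ = 0; that is, A is nearly free as a left
B-module. -/
theorem monomial_algebra_nearly_free
    (k : Type) [Field k] (n : ℕ) (W : Set (List (Fin n))) :
    let mono : List (Fin n) → FreeAlgebra k (Fin n) :=
      fun w => (w.map (FreeAlgebra.ι k)).prod
    let r : FreeAlgebra k (Fin n) → FreeAlgebra k (Fin n) → Prop :=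
      fun a c => ∃ w ∈ W, a = mono w ∧ c = 0
    let π : FreeAlgebra k (Fin n) →ₐ[k] RingQuot r := RingQuot.mkAlgHom k r
    let πw : List (Fin n) → RingQuot r := fun w => π (mono w)
    ∀ (S E : Set (List (Fin n))) (B : Subalgebra k (RingQuot r)),
      (B : Set (RingQuot r)) = ↑(Submodule.span k (πw '' S)) →
      ([] : List (Fin n)) ∈ E →
      (∀ a : RingQuot r,
        a ∈ Submodule.span k {z : RingQuot r | ∃ b ∈ B, ∃ x ∈ E, z = b * πw x}) →
      (∀ u : List (Fin n), πw u ≠ 0 →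
        ∃! p : List (Fin n) × List (Fin n), p.1 ∈ S ∧ p.2 ∈ E ∧ u = p.1 ++ p.2) →
      ∀ (d : ℕ) (bs : Fin d → RingQuot r) (xs : Fin d → List (Fin n)),
        (∀ i, bs i ∈ B) → (∀ i, xs i ∈ E) → Function.Injective xs →
        ∑ i, bs i * πw (xs i) = 0 → ∀ i, bs i * πw (xs i) = 0 := by
  intro mono r π πw S E B hB _ _ hfac d bs xs hbs hxs hinj hsum
  exact MonomialAlgebra.mul_ofWord_eq_zero_of_sum_eq_zero (W := W) hfac
    (fun i => (Set.ext_iff.mp hB (bs i)).mp (hbs i)) hxs hinj hsum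
end
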